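/- arXiv:1711.06720 — 6 statements merged into one kernel-verified Lean document; each statement's English description precedes it below -/
import Mathlib

section
/- If a quartet system Q on a finite set X is saturated and thin, then Q is transitive. That is, if no two quartets in Q have the same 4-element support, and for every quartet ab|cd in Q and every x outside {a,b,c,d} at least one of ax|cd, ab|cx is in Q, then whenever ab|cx and ab|xd are both in Q (with a,b,c,d,x distinct), the quartet ab|cd is also in Q. -/
/- Quartets on a finite set X, encoded as unordered pairs of unordered pairs.
   `qt a b c d` is the quartet ab|cd. -/

variable {X : Type*} [Fintype X] [DecidableEq X]

/-- The quartet ab|cd. -/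
def qt (a b c d : X) : Sym2 (Sym2 X) := s(s(a, b), s(c, d))

/-- The support of a quartet: the set of elements appearing in it. -/
def qsupp (q : Sym2 (Sym2 X)) : Set X := {x | ∃ p ∈ q, x ∈ p}

/-- A valid quartet: a partition of a 4-element subset into two 2-element blocks. -/
def IsQuartet (q : Sym2 (Sym2 X)) : Prop :=
  ∃ a b c d : X, ([a, b, c, d] : List X).Nodup ∧ q = qt a b c d

/-- Q is thin: no two quartets in Q have the same support. -/
def Thin (Q : Set (Sym2 (Sym2 X))) : Prop :=
  ∀ q ∈ Q, ∀ q' ∈ Q, qsupp q = qsupp q' → q = q'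

/-- Q is saturated: for ab|cd in Q and x outside, one of ax|cd, ab|cx is in Q. -/
def Saturated (Q : Set (Sym2 (Sym2 X))) : Prop :=
  ∀ a b c d x : X, ([a, b, c, d, x] : List X).Nodup →
    qt a b c d ∈ Q → qt a x c d ∈ Q ∨ qt a b c x ∈ Q

/-- Q is transitive: if ab|cx and ab|xd are in Q then ab|cd is in Q. -/
def QTransitive (Q : Set (Sym2 (Sym2 X))) : Prop :=
  ∀ a b c d x : X, ([a, b, c, d, x] : List X).Nodup →
    qt a b c x ∈ Q → qt a b x d ∈ Q → qt a b c d ∈ Q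

/-- If a quartet system is saturated and thin, then it is transitive. -/
theorem saturated_thin_implies_transitive (Q : Set (Sym2 (Sym2 X)))
    (hval : ∀ q ∈ Q, IsQuartet q) (hthin : Thin Q) (hsat : Saturated Q) :
    QTransitive Q := by
  intro a b c d x hnd h1 h2
  simp only [List.nodup_cons, List.mem_cons, List.not_mem_nil, or_false,
    List.nodup_nil, and_true, not_or] at hnd
  obtain ⟨⟨hab, hac, had, hax⟩, ⟨hbc, hbd, hbx⟩, ⟨hcd, hcx⟩, hdx⟩ := hnd
  -- rewrite hypotheses in swapped form
  have e1 : qt c x a b = qt a b c x := by simp [qt, Sym2.eq_iff]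
  have e2 : qt d x a b = qt a b x d := by simp [qt, Sym2.eq_iff] <;> tauto
  have e3 : qt c d a b = qt a b c d := by simp [qt, Sym2.eq_iff]
  have nd1 : ([c, x, a, b, d] : List X).Nodup := by
    simp_all [List.nodup_cons, eq_comm] <;> tauto
  have nd2 : ([d, x, a, b, c] : List X).Nodup := by
    simp_all [List.nodup_cons, eq_comm] <;> tauto
  have s1 := hsat c x a b d nd1 (by rw [e1]; exact h1)
  have s2 := hsat d x a b c nd2 (by rw [e2]; exact h2)
  rcases s1 with s1 | s1
  · rwa [e3] at s1
  rcases s2 with s2 | s2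
  · rwa [show qt d c a b = qt a b c d by simp [qt, Sym2.eq_iff] <;> tauto] at s2
  -- s1 : qt c x a d ∈ Q, s2 : qt d x a c ∈ Q, same support, thin → contradiction
  exfalso
  have qsupp_qt : ∀ u v w y : X, qsupp (qt u v w y) = {u, v, w, y} := by
    intro u v w y
    ext z
    simp only [qsupp, qt, Set.mem_setOf_eq, Sym2.mem_iff, Set.mem_insert_iff,
      Set.mem_singleton_iff]
    constructor
    · rintro ⟨p, hp, hz⟩
      rcases hp with rfl | rfl <;> simp only [Sym2.mem_iff] at hz <;> tauto
    · rintro (rfl | rfl | rfl | rfl)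
      · exact ⟨s(z, v), Or.inl rfl, by simp⟩
      · exact ⟨s(u, z), Or.inl rfl, by simp⟩
      · exact ⟨s(z, y), Or.inr rfl, by simp⟩
      · exact ⟨s(w, z), Or.inr rfl, by simp⟩
  have hsupp : qsupp (qt c x a d) = qsupp (qt d x a c) := by
    rw [qsupp_qt, qsupp_qt]
    ext z
    simp only [Set.mem_insert_iff, Set.mem_singleton_iff]
    tauto
  have := hthin _ s1 _ s2 hsupp
  simp only [qt, Sym2.eq_iff] at this
  tauto
end

section
/- For any phylogenetic X-tree T, the set Q(T) of quartets displayed by T is saturated: if ab|cd is displayed by T and x ∈ X \ {a,b,c,d}, then T displays at least one of ax|cd and ab|cx. -/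
/- For any phylogenetic X-tree T, the displayed quartet system Q(T) is
   saturated. -/

variable {X : Type*} [Fintype X] [DecidableEq X]

/-- A phylogenetic X-tree. -/
structure PhyloTree (X : Type*) where
  V : Type*
  [fV : Fintype V]
  G : SimpleGraph V
  tree : G.IsTree
  leaf : X ↪ V
  deg_leaf : ∀ x : X, (G.neighborSet (leaf x)).ncard = 1
  leaf_of_deg : ∀ v : V, (G.neighborSet v).ncard = 1 → ∃ x, leaf x = v
  no_deg_two : ∀ v : V, (G.neighborSet v).ncard ≠ 2

attribute [instance] PhyloTree.fV

/-- T displays ab|cd: the a–b path and the c–d path are vertex-disjoint. -/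
def PhyloTree.displays (T : PhyloTree X) (a b c d : X) : Prop :=
  ∃ (p : T.G.Walk (T.leaf a) (T.leaf b)) (q : T.G.Walk (T.leaf c) (T.leaf d)),
    p.IsPath ∧ q.IsPath ∧ ∀ v, v ∈ p.support → v ∉ q.support

private lemma walk_split {V : Type*} [DecidableEq V] {G : SimpleGraph V}
    {A B C D u : V} (p : G.Walk A B) (q : G.Walk C D)
    (hdisj : ∀ v, v ∈ p.support → v ∉ q.support)
    (r : G.Walk u A) :
    (∃ r' : G.Walk u A, ∀ v ∈ r'.support, v ∉ q.support) ∨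
    (∃ s : G.Walk u C, ∀ v ∈ s.support, v ∉ p.support) := by
  induction r with
  | nil =>
    left
    refine ⟨SimpleGraph.Walk.nil, ?_⟩
    intro v hv
    simp only [SimpleGraph.Walk.support_nil, List.mem_singleton] at hv
    subst hv
    exact hdisj _ p.start_mem_support
  | @cons u' w A hadj r₀ ih =>
    by_cases hq : u' ∈ q.support
    · right
      refine ⟨(q.takeUntil u' hq).reverse, ?_⟩
      intro v hv hvp
      have hvq : v ∈ q.support := q.support_takeUntil_subset hq
        (by simpa [SimpleGraph.Walk.support_reverse] using hv)
      exact hdisj v hvp hvq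
    · by_cases hp : u' ∈ p.support
      · left
        refine ⟨(p.takeUntil u' hp).reverse, ?_⟩
        intro v hv
        exact hdisj v (p.support_takeUntil_subset hp
          (by simpa [SimpleGraph.Walk.support_reverse] using hv))
      · rcases ih p hdisj with ⟨r', hr'⟩ | ⟨s, hs⟩
        · left
          refine ⟨SimpleGraph.Walk.cons hadj r', ?_⟩
          intro v hv
          rw [SimpleGraph.Walk.support_cons, List.mem_cons] at hv
          rcases hv with rfl | hv
          · exact hq
          · exact hr' v hv
        · right
          refine ⟨SimpleGraph.Walk.cons hadj s, ?_⟩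
          intro v hv
          rw [SimpleGraph.Walk.support_cons, List.mem_cons] at hv
          rcases hv with rfl | hv
          · exact hp
          · exact hs v hv

/-- Q(T) is saturated: if T displays ab|cd and x ∈ X \ {a,b,c,d}, then T
    displays at least one of ax|cd and ab|cx. -/
theorem tree_quartets_saturated (T : PhyloTree X) (a b c d x : X)
    (h : ([a, b, c, d, x] : List X).Nodup) (hd : T.displays a b c d) :
    T.displays a x c d ∨ T.displays a b c x := by
  classical
  obtain ⟨p, q, hp, hq, hdisj⟩ := hd
  obtain ⟨r⟩ := T.tree.isConnected.preconnected (T.leaf x) (T.leaf a)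
  rcases walk_split p q hdisj r with ⟨r', hr'⟩ | ⟨s, hs⟩
  · left
    refine ⟨r'.bypass.reverse, q, r'.bypass_isPath.reverse, hq, ?_⟩
    intro v hv
    have : v ∈ r'.support := r'.support_bypass_subset
      (by simpa [SimpleGraph.Walk.support_reverse] using hv)
    exact hr' v this
  · right
    refine ⟨p, s.bypass.reverse, hp, s.bypass_isPath.reverse, ?_⟩
    intro v hvp hvq
    have : v ∈ s.support := s.support_bypass_subset
      (by simpa [SimpleGraph.Walk.support_reverse] using hvq)
    exact hs v this hvp
end

section
/- Let F be a minimally dense, cyclative qnet system on X and suppose all four qnets in F whose supports are 4-subsets of a fixed 5-set {a,b,c,d,x} ⊆ X restricted appropriately are of Type IV. If F contains the 4-cycle qnets with circular orders (a,b,c,d) and (x,a,c,d), and also the 4-cycle qnet on {b,c,d,x} is in F, then the 4-cycle qnet with circular order (a,b,d,x) is in F, and consequently the 4-cycle qnet on {b,c,d,x} must have circular order (x,b,c,d). -/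
/- In a minimally dense, cyclative qnet system, two overlapping 4-cycle qnets force the circular order of the fifth restriction. -/

/-- Combinatorial encoding of a quarnet (qnet): a 4-leaved binary level-1
    network. Tree-type qnets (Types I, II, III) are an unordered pair of sides,
    each side a 2-element set of leaves decorated by a Boolean recording
    whether that side carries a 3-cycle. Cycle-type (Type IV) qnets are encoded
    by their pair of diagonals (opposite leaves in the 4-cycle), which
    determines the circular order up to rotation and reflection. -/
inductive Qnet (X : Type*) where
  | treeType : Sym2 (Bool × Sym2 X) → Qnet X
  | cycleType : Sym2 (Sym2 X) → Qnet X

variable {X : Type*} [Fintype X] [DecidableEq X]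

/-- The tree-type qnet with split ab|cd, with a 3-cycle on the ab-side iff s,
    and on the cd-side iff t. -/
def qT (s t : Bool) (a b c d : X) : Qnet X := .treeType s((s, s(a, b)), (t, s(c, d)))

/-- Type I qnet: the quartet tree ab|cd. -/
def qI (a b c d : X) : Qnet X := qT false false a b c d

/-- Type II qnet ab|cd with the 3-cycle on the ab-side. -/
def qII (a b c d : X) : Qnet X := qT true false a b c d

/-- Type II qnet ab|cd with the 3-cycle on the cd-side. -/
def qII' (a b c d : X) : Qnet X := qT false true a b c d

/-- Type III qnet ab|cd (3-cycles on both sides). -/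
def qIII (a b c d : X) : Qnet X := qT true true a b c d

/-- Type IV qnet: the 4-cycle with circular leaf order (a,b,c,d). -/
def qIV (a b c d : X) : Qnet X := .cycleType s(s(a, c), s(b, d))

/-- The support (leaf set) of a qnet. -/
def Qnet.supp : Qnet X → Set X
  | .treeType m => {x | ∃ p ∈ m, x ∈ p.2}
  | .cycleType m => {x | ∃ p ∈ m, x ∈ p}

/-- A valid qnet on four distinct leaves. -/
def IsQnet (q : Qnet X) : Prop :=
  ∃ a b c d : X, ([a, b, c, d] : List X).Nodup ∧
    ((∃ s t : Bool, q = qT s t a b c d) ∨ q = qIV a b c d)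

/-- A qnet system F on X is minimally dense: it consists of qnets and contains
    exactly one qnet with support Y for each 4-element subset Y of X. -/
def MinDense (F : Set (Qnet X)) : Prop :=
  (∀ q ∈ F, IsQnet q) ∧
  ∀ Y : Finset X, Y.card = 4 → ∃! q, q ∈ F ∧ Qnet.supp q = ↑Y

/-- A qnet exhibits a quartet iff it is of tree type (I, II or III) with that
    split; Type IV qnets exhibit no quartet. -/
def Qnet.exhibits (q : Qnet X) (Q : Sym2 (Sym2 X)) : Prop :=
  ∃ (s t : Bool) (p r : Sym2 X), q = .treeType s((s, p), (t, r)) ∧ Q = s(p, r)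

/-- Σ(F): the quartets exhibited by qnets in F. -/
def sigmaF (F : Set (Qnet X)) : Set (Sym2 (Sym2 X)) :=
  {Q | ∃ q ∈ F, q.exhibits Q}

/-- The qnet saturation conditions (S1)–(S3). -/
def QnetSaturated (F : Set (Qnet X)) : Prop :=
  ∀ a b c d x : X, ([a, b, c, d, x] : List X).Nodup →
    (qI a b c d ∈ F →
      qI a b c x ∈ F ∨ qII a b c x ∈ F ∨ qI a x c d ∈ F ∨ qII a x c d ∈ F) ∧
    (qII a b c d ∈ F →
      qII a b c x ∈ F ∨ qIII a b c x ∈ F ∨ qI a x c d ∈ F ∨ qII a x c d ∈ F) ∧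
    (qIII a b c d ∈ F →
      qII a b c x ∈ F ∨ qIII a b c x ∈ F ∨ qII' a x c d ∈ F ∨ qIII a x c d ∈ F)

/-- F is cyclative: 4-cycle qnets with circular orders (a,b,c,d) and (x,a,c,d)
    force the one with circular order (a,b,d,x). -/
def Cyclative (F : Set (Qnet X)) : Prop :=
  ∀ a b c d x : X, ([a, b, c, d, x] : List X).Nodup →
    qIV a b c d ∈ F → qIV x a c d ∈ F → qIV a b d x ∈ F

/-- q is a Type IV (4-cycle) qnet. -/
def IsTypeIV (q : Qnet X) : Prop :=
  ∃ a b c d : X, ([a, b, c, d] : List X).Nodup ∧ q = qIV a b c d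

/-- Let F be minimally dense and cyclative, with the 4-cycle qnets of circular
    orders (a,b,c,d) and (x,a,c,d) in F, and suppose the qnet of F on
    {b,c,d,x} is of Type IV. Then the 4-cycle qnet with circular order
    (a,b,d,x) is in F, and the qnet of F on {b,c,d,x} is the 4-cycle with
    circular order (x,b,c,d). -/
theorem cyclative_forces_restriction (F : Set (Qnet X)) (hmd : MinDense F)
    (hcyc : Cyclative F) (a b c d x : X)
    (h5 : ([a, b, c, d, x] : List X).Nodup)
    (h1 : qIV a b c d ∈ F) (h2 : qIV x a c d ∈ F)
    (h3 : ∃ q ∈ F, IsTypeIV q ∧ Qnet.supp q = ({b, c, d, x} : Set X)) :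
    qIV a b d x ∈ F ∧ qIV x b c d ∈ F := by
  have step1 : qIV a b d x ∈ F := hcyc a b c d x h5 h1 h2
  refine ⟨step1, ?_⟩
  have hnd : ([d, x, a, b, c] : List X).Nodup := by
    simp only [List.nodup_cons, List.mem_cons, List.not_mem_nil, or_false,
      List.nodup_nil, and_true, List.mem_singleton] at h5 ⊢
    tauto
  have e1 : qIV d x a b = qIV a b d x := by
    unfold qIV
    rw [Sym2.eq_swap (a := d) (b := a), Sym2.eq_swap (a := x) (b := b)]
  have e2 : qIV c d a b = qIV a b c d := by
    unfold qIV
    rw [Sym2.eq_swap (a := c) (b := a), Sym2.eq_swap (a := d) (b := b)]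
  have step2 : qIV d x b c ∈ F := hcyc d x a b c hnd (e1 ▸ step1) (e2 ▸ h1)
  have e3 : qIV x b c d = qIV d x b c := by
    unfold qIV
    rw [Sym2.eq_swap (a := x) (b := c), Sym2.eq_swap (a := b) (b := d), Sym2.eq_swap]
  rwa [e3]
end

section
/- A binary phylogenetic network N of cycle-type on X (a single cycle of length |X| with each cycle vertex attached to a distinct leaf) displays every quartet ab|cd for which the pairs {a,b} and {c,d} do not interleave on the cycle, and exhibits no quartets at all when |X| ≥ 4; in particular, for each 4-subset {a,b,c,d} of X, exactly two of the three quartets on {a,b,c,d} are displayed by N. -/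
/-!
On the cycle, a path between two leaves cannot turn back, so it sweeps every cycle vertex of one
of the two arcs joining their attachment points. Hence if `{c, d}` interleaves `{a, b}`, both arcs
between `a` and `b` contain the attachment point of `c` or of `d`, which every `c`–`d` path
visits; if they do not interleave, two disjoint arcs join `a` to `b` and `c` to `d`. Every cycle
edge lies on the cycle and so is no bridge, while deleting a pendant edge only isolates its leaf,
so no quartet is exhibited. Cutting the circle open at position `0`, interleaving becomes a
statement about four distinct naturals, of which exactly one of the three pairings interleaves.
-/

variable {X : Type*} [Fintype X] [DecidableEq X]

/-- The cycle-type network on X determined by the circular ordering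
    f : ZMod m ≃ X: cycle vertices ZMod m joined in a cycle, with the pendant
    leaf f i attached at cycle vertex i. -/
def cycNet (m : ℕ) (f : ZMod m ≃ X) : SimpleGraph (ZMod m ⊕ X) :=
  SimpleGraph.fromRel (fun u v =>
    (∃ i : ZMod m, u = Sum.inl i ∧ v = Sum.inl (i + 1)) ∨
    (∃ i : ZMod m, u = Sum.inl i ∧ v = Sum.inr (f i)))

/-- The pairs {a,b} and {c,d} interleave in the circular ordering given by f. -/
def Interleaves {m : ℕ} (f : ZMod m ≃ X) (a b c d : X) : Prop :=
  ∃ i1 i2 i3 i4 : ZMod m, i1.val < i2.val ∧ i2.val < i3.val ∧ i3.val < i4.val ∧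
    ((({f i1, f i3} : Finset X) = {a, b} ∧ ({f i2, f i4} : Finset X) = {c, d}) ∨
     (({f i1, f i3} : Finset X) = {c, d} ∧ ({f i2, f i4} : Finset X) = {a, b}))

/-- ab|cd is displayed by the cycle-type network: vertex-disjoint paths a–b and
    c–d. -/
def cycDisplays (m : ℕ) (f : ZMod m ≃ X) (a b c d : X) : Prop :=
  ∃ (p : (cycNet m f).Walk (Sum.inr a) (Sum.inr b))
    (q : (cycNet m f).Walk (Sum.inr c) (Sum.inr d)),
    p.IsPath ∧ q.IsPath ∧ ∀ v, v ∈ p.support → v ∉ q.support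

/-- ab|cd is exhibited by the cycle-type network: some cut-edge separates
    {a,b} from {c,d}. -/
def cycExhibits (m : ℕ) (f : ZMod m ≃ X) (a b c d : X) : Prop :=
  ∃ u v : ZMod m ⊕ X, (cycNet m f).Adj u v ∧
    ¬ ((cycNet m f).deleteEdges {s(u, v)}).Connected ∧
    ((cycNet m f).deleteEdges {s(u, v)}).Reachable (Sum.inr a) (Sum.inr b) ∧
    ((cycNet m f).deleteEdges {s(u, v)}).Reachable (Sum.inr c) (Sum.inr d) ∧
    ¬ ((cycNet m f).deleteEdges {s(u, v)}).Reachable (Sum.inr a) (Sum.inr c)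

open SimpleGraph

section

variable {m : ℕ}

lemma ZMod.val_sub_eq_ite [NeZero m] (i j : ZMod m) :
    (j - i).val = if i.val ≤ j.val then j.val - i.val else m + j.val - i.val := by
  have hsum := ZMod.val_add (j - i) i
  rw [sub_add_cancel] at hsum
  have := ZMod.val_lt (j - i)
  have := ZMod.val_lt i
  have : j.val = (j - i).val + i.val ∨ j.val + m = (j - i).val + i.val := by
    rcases lt_or_ge ((j - i).val + i.val) m with h | h
    · exact .inl (hsum.trans (Nat.mod_eq_of_lt h))
    · right; rw [hsum, Nat.mod_eq_sub_mod h, Nat.mod_eq_of_lt (by omega)]; omega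
  split_ifs <;> omega

def cyclicArc (i k : ZMod m) : Set (ZMod m) := {j | (j - i).val ≤ (k - i).val}

lemma left_mem_cyclicArc (i k : ZMod m) : i ∈ cyclicArc i k := by
  simp [cyclicArc]

lemma right_mem_cyclicArc (i k : ZMod m) : k ∈ cyclicArc i k :=
  show (k - i).val ≤ (k - i).val from le_rfl

lemma mem_cyclicArc_iff [NeZero m] {i k j : ZMod m} : j ∈ cyclicArc i k ↔
    if i.val ≤ k.val then i.val ≤ j.val ∧ j.val ≤ k.val else i.val ≤ j.val ∨ j.val ≤ k.val := by
  simp only [cyclicArc, Set.mem_ofPred_eq, ZMod.val_sub_eq_ite]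
  have := ZMod.val_lt i
  have := ZMod.val_lt j
  have := ZMod.val_lt k
  split_ifs <;> constructor <;> intro <;> omega

-- `(ε * (t - i)).val` is the number of steps from `i` to `t` in direction `ε`.
def Sweeps (S : Set (ZMod m)) (i t : ZMod m) : Prop :=
  ∃ ε : ZMod m, (ε = 1 ∨ ε = -1) ∧ ∀ j : ℕ, j ≤ (ε * (t - i)).val → i + ε * j ∈ S

lemma sweeps_self {S : Set (ZMod m)} {i : ZMod m} (hi : i ∈ S) : Sweeps S i i :=
  ⟨1, .inl rfl, fun j hj => by simp_all⟩

lemma Sweeps.cyclicArc_subset [NeZero m] {S : Set (ZMod m)} {i t : ZMod m} (h : Sweeps S i t) :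
    cyclicArc i t ⊆ S ∨ cyclicArc t i ⊆ S := by
  obtain ⟨ε, rfl | rfl, hcov⟩ := h
  · refine .inl fun k hk => ?_
    simpa using hcov (k - i).val (by simpa [cyclicArc] using hk)
  · refine .inr fun k hk => ?_
    have hle : (i - k).val ≤ (-1 * (t - i)).val := by
      rw [show i - k = (i - t) - (k - t) by ring, ZMod.val_sub hk]
      simp
    simpa using hcov _ hle

lemma Sweeps.insert [Fact (1 < m)] {S : Set (ZMod m)} {i t ε' : ZMod m}
    (hε' : ε' = 1 ∨ ε' = -1) (h : Sweeps S (i + ε') t) (hi : i ∉ S) (hstep : i + ε' ∈ S) :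
    Sweeps (insert i S) i t := by
  obtain ⟨ε, hε, hcov⟩ := h
  have sq : ∀ e : ZMod m, (e = 1 ∨ e = -1) → e * e = 1 := by rintro e (rfl | rfl) <;> ring
  obtain rfl | rfl : ε = ε' ∨ ε = -ε' := by
    rcases hε with rfl | rfl <;> rcases hε' with rfl | rfl <;> simp
  · refine ⟨ε, hε, fun j hj => ?_⟩
    rcases j with _ | j
    · simp
    · have h1 : (1 : ZMod m).val ≤ (ε * (t - i)).val := by rw [ZMod.val_one]; omega
      have hj' : j ≤ (ε * (t - (i + ε))).val := by
        rw [show ε * (t - (i + ε)) = ε * (t - i) - 1 by linear_combination (-1 : ZMod m) * sq ε hε,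
          ZMod.val_sub h1, ZMod.val_one]
        omega
      convert Set.mem_insert_of_mem i (hcov j hj') using 1
      push_cast; ring
  -- turning back would revisit `i`, so the sweep from `i + ε'` is the single point `t`
  · have ht : t = i + ε' := by
      by_contra ht
      have hne : -ε' * (t - (i + ε')) ≠ 0 := fun h => ht (sub_eq_zero.1 (by
        linear_combination (-ε') * h - (t - (i + ε')) * sq ε' hε'))
      exact hi (by simpa using hcov 1 (Nat.one_le_iff_ne_zero.2 ((ZMod.val_eq_zero _).not.2 hne)))
    refine ⟨ε', hε', fun j hj => ?_⟩
    rw [ht, add_sub_cancel_left, sq ε' hε', ZMod.val_one] at hj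
    interval_cases j
    · simp
    · simpa using Set.mem_insert_of_mem i hstep

end

lemma Finset.pair_eq_pair_iff {α : Type*} [DecidableEq α] {x y z w : α} :
    ({x, y} : Finset α) = {z, w} ↔ x = z ∧ y = w ∨ x = w ∧ y = z := by
  rw [← Finset.coe_inj, Finset.coe_pair, Finset.coe_pair, Set.pair_eq_pair_iff]

def LinearInterleave (p q r s : ℕ) : Prop := Xor (r ∈ Set.uIoo p q) (s ∈ Set.uIoo p q)

lemma linearInterleave_exactly_one {p q r s : ℕ} (hpq : p ≠ q) (hpr : p ≠ r) (hps : p ≠ s)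
    (hqr : q ≠ r) (hqs : q ≠ s) (hrs : r ≠ s) :
    (LinearInterleave p q r s ∧ ¬ LinearInterleave p r q s ∧ ¬ LinearInterleave p s q r) ∨
    (¬ LinearInterleave p q r s ∧ LinearInterleave p r q s ∧ ¬ LinearInterleave p s q r) ∨
    (¬ LinearInterleave p q r s ∧ ¬ LinearInterleave p r q s ∧ LinearInterleave p s q r) := by
  simp only [LinearInterleave, Xor, ← Set.Ioo_min_max, Set.mem_Ioo]
  omega

section

omit [Fintype X] [DecidableEq X]

variable {m : ℕ} (f : ZMod m ≃ X)

lemma val_symm_ne_of_ne [NeZero m] {x y : X} (h : x ≠ y) : (f.symm x).val ≠ (f.symm y).val :=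
  fun e => h (f.symm.injective (ZMod.val_injective m e))

namespace cycNet

lemma adj_inr_iff (x : X) (w : ZMod m ⊕ X) :
    (cycNet m f).Adj (.inr x) w ↔ w = .inl (f.symm x) := by
  simp only [cycNet, fromRel_adj]
  constructor
  · rintro ⟨-, (⟨_, h, -⟩ | ⟨_, h, -⟩) | (⟨_, -, h⟩ | ⟨j, rfl, h⟩)⟩ <;> simp_all
  · rintro rfl
    exact ⟨by simp, .inr (.inr ⟨f.symm x, rfl, by simp⟩)⟩

lemma inl_mem_support_of_ne {x : X} {v : ZMod m ⊕ X} (q : (cycNet m f).Walk (.inr x) v)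
    (hv : v ≠ .inr x) : .inl (f.symm x) ∈ q.support := by
  cases q with
  | nil => exact absurd rfl hv
  | cons h q =>
    obtain rfl := (adj_inr_iff f x _).1 h
    exact List.mem_cons_of_mem _ q.start_mem_support

lemma not_reachable_deleteEdges_pendant {x y : X} (hxy : x ≠ y) :
    ¬ ((cycNet m f).deleteEdges {s(.inl (f.symm x), .inr x)}).Reachable (.inr x) (.inr y) := by
  rintro ⟨p⟩
  cases p with
  | nil => exact hxy rfl
  | cons h _ =>
    rw [deleteEdges_adj, adj_inr_iff] at h
    obtain ⟨rfl, hne⟩ := h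
    exact hne Sym2.eq_swap

variable [Fact (1 < m)]

lemma adj_inl_iff (i : ZMod m) (w : ZMod m ⊕ X) :
    (cycNet m f).Adj (.inl i) w ↔ w = .inl (i + 1) ∨ w = .inl (i - 1) ∨ w = .inr (f i) := by
  simp only [cycNet, fromRel_adj]
  constructor
  · rintro ⟨-, (⟨_, h, rfl⟩ | ⟨_, h, rfl⟩) | (⟨j, rfl, h⟩ | ⟨_, -, h⟩)⟩ <;>
      simp_all [eq_sub_iff_add_eq]
  · rintro (rfl | rfl | rfl)
    · exact ⟨by simp, .inl (.inl ⟨i, rfl, rfl⟩)⟩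
    · exact ⟨by simp [eq_sub_iff_add_eq], .inr (.inl ⟨i - 1, rfl, by simp⟩)⟩
    · exact ⟨by simp, .inl (.inr ⟨i, rfl, rfl⟩)⟩

def cycleWalk : (n : ℕ) → (i : ZMod m) → (cycNet m f).Walk (.inl i) (.inl (i + n))
  | 0, i => Walk.nil.copy rfl (by simp)
  | n + 1, i => ((cycleWalk n (i + 1)).cons ((adj_inl_iff f i _).2 (.inl rfl))).copy rfl
      (by rw [Sum.inl.injEq]; push_cast; ring)

lemma mem_support_cycleWalk_iff {n : ℕ} {i : ZMod m} {v : ZMod m ⊕ X} :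
    v ∈ (cycleWalk f n i).support ↔ ∃ j ≤ n, v = .inl (i + j) := by
  induction n generalizing i with
  | zero => simp [cycleWalk]
  | succ n ih =>
    simp only [cycleWalk, Walk.support_copy, Walk.support_cons, List.mem_cons, ih]
    constructor
    · rintro (rfl | ⟨j, hj, rfl⟩)
      · exact ⟨0, by omega, by simp⟩
      · exact ⟨j + 1, by omega, by rw [Sum.inl.injEq]; push_cast; ring⟩
    · rintro ⟨_ | j, hj, rfl⟩
      · simp
      · exact .inr ⟨j, by omega, by rw [Sum.inl.injEq]; push_cast; ring⟩

lemma mem_edges_cycleWalk {n : ℕ} {i : ZMod m} {e : Sym2 (ZMod m ⊕ X)}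
    (he : e ∈ (cycleWalk f n i).edges) : ∃ j < n, e = s(.inl (i + j), .inl (i + j + 1)) := by
  induction n generalizing i with
  | zero => simp [cycleWalk] at he
  | succ n ih =>
    simp only [cycleWalk, Walk.edges_copy, Walk.edges_cons, List.mem_cons] at he
    rcases he with rfl | he
    · exact ⟨0, by omega, by simp⟩
    · obtain ⟨j, hj, rfl⟩ := ih he
      exact ⟨j + 1, by omega, by push_cast; ring_nf⟩

lemma isPath_cycleWalk {n : ℕ} (hn : n < m) (i : ZMod m) : (cycleWalk f n i).IsPath := by
  induction n generalizing i with
  | zero => simp [cycleWalk]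
  | succ n ih =>
    simp only [cycleWalk, Walk.isPath_copy, Walk.cons_isPath_iff, mem_support_cycleWalk_iff]
    refine ⟨ih (by omega) _, ?_⟩
    rintro ⟨j, hj, h⟩
    have : ((j + 1 : ℕ) : ZMod m) = 0 := by
      push_cast; linear_combination -(Sum.inl.inj h)
    rw [ZMod.natCast_eq_zero_iff] at this
    exact absurd (Nat.le_of_dvd (by omega) this) (by omega)

def leafWalk (x y : X) : (cycNet m f).Walk (.inr x) (.inr y) :=
  Walk.cons ((adj_inr_iff f x _).2 rfl)
    (((cycleWalk f (f.symm y - f.symm x).val (f.symm x)).copy rfl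
        (by rw [ZMod.natCast_val, ZMod.cast_id', id, add_sub_cancel])).append
      (Walk.cons ((adj_inl_iff f (f.symm y) _).2 (.inr (.inr (by simp)))) Walk.nil))

lemma mem_support_leafWalk {x y : X} {v : ZMod m ⊕ X} (hv : v ∈ (leafWalk f x y).support) :
    v = .inr x ∨ v = .inr y ∨ ∃ k ∈ cyclicArc (f.symm x) (f.symm y), v = .inl k := by
  simp only [leafWalk, Walk.support_cons, Walk.support_append, Walk.support_copy,
    Walk.support_nil, List.tail_cons, List.mem_cons, List.mem_append, mem_support_cycleWalk_iff,
    List.not_mem_nil, or_false] at hv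
  rcases hv with rfl | ⟨j, hj, rfl⟩ | rfl
  · exact .inl rfl
  · refine .inr (.inr ⟨_, ?_, rfl⟩)
    have := ZMod.val_lt (f.symm y - f.symm x)
    show ((f.symm x + j) - f.symm x).val ≤ _
    rwa [add_sub_cancel_left, ZMod.val_cast_of_lt (by omega)]
  · exact .inr (.inl rfl)

lemma isPath_leafWalk {x y : X} (hxy : x ≠ y) : (leafWalk f x y).IsPath := by
  have hcycle := (isPath_cycleWalk f (ZMod.val_lt (f.symm y - f.symm x)) (f.symm x)).support_nodup
  rw [Walk.isPath_def]
  simp only [leafWalk, Walk.support_cons, Walk.support_append, Walk.support_copy,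
    Walk.support_nil, List.tail_cons, List.nodup_cons, List.nodup_append, List.mem_append,
    mem_support_cycleWalk_iff]
  simp [hcycle, hxy]

lemma cycDisplays_of_disjoint {x y z w : X} (hxy : x ≠ y) (hzw : z ≠ w)
    (h : Disjoint (cyclicArc (f.symm x) (f.symm y)) (cyclicArc (f.symm z) (f.symm w))) :
    cycDisplays m f x y z w := by
  refine ⟨leafWalk f x y, leafWalk f z w, isPath_leafWalk f hxy, isPath_leafWalk f hzw, ?_⟩
  have position : ∀ {a b : X} {v}, v ∈ (leafWalk f a b).support →
      ∃ k ∈ cyclicArc (f.symm a) (f.symm b), v = .inl k ∨ v = .inr (f k) := by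
    intro a b v hv
    rcases mem_support_leafWalk f hv with rfl | rfl | ⟨k, hk, rfl⟩
    · exact ⟨_, left_mem_cyclicArc _ _, .inr (by simp)⟩
    · exact ⟨_, right_mem_cyclicArc _ _, .inr (by simp)⟩
    · exact ⟨k, hk, .inl rfl⟩
  intro v hv hv'
  obtain ⟨k, hk, hv⟩ := position hv
  obtain ⟨k', hk', hv'⟩ := position hv'
  have : k = k' := by rcases hv with rfl | rfl <;> rcases hv' with h | h <;> simp_all
  exact Set.disjoint_left.1 h hk (this ▸ hk')

lemma sweeps_support {i : ZMod m} {b : X} (p : (cycNet m f).Walk (.inl i) (.inr b))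
    (hp : p.IsPath) : Sweeps {k | .inl k ∈ p.support} i (f.symm b) := by
  generalize hu : (Sum.inl i : ZMod m ⊕ X) = u at p
  generalize hv : (Sum.inr b : ZMod m ⊕ X) = v at p
  induction p generalizing i with
  | nil => exact absurd (hu.trans hv.symm) (by simp)
  | @cons _ w _ hadj q ih =>
    subst hu hv
    obtain ⟨hq, hiq⟩ := (Walk.cons_isPath_iff _ _).1 hp
    have hS : {k | .inl k ∈ (Walk.cons hadj q).support} = insert i {k | .inl k ∈ q.support} := by
      ext; simp
    rw [hS]
    rcases (adj_inl_iff f i w).1 hadj with rfl | rfl | rfl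
    · exact (ih rfl rfl hq).insert (.inl rfl) hiq q.start_mem_support
    · exact Sweeps.insert (.inr rfl) (by simpa only [← sub_eq_add_neg] using ih rfl rfl hq) hiq
        (by rw [← sub_eq_add_neg]; exact q.start_mem_support)
    · obtain rfl : b = f i := by
        by_contra hb
        exact hiq (by simpa using inl_mem_support_of_ne f q (by simpa [eq_comm] using hb))
      simpa using sweeps_self (Set.mem_insert i {k | .inl k ∈ q.support})

lemma cyclicArc_subset_support {x y : X} (hxy : x ≠ y) (p : (cycNet m f).Walk (.inr x) (.inr y))
    (hp : p.IsPath) :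
    cyclicArc (f.symm x) (f.symm y) ⊆ {k | .inl k ∈ p.support} ∨
      cyclicArc (f.symm y) (f.symm x) ⊆ {k | .inl k ∈ p.support} := by
  cases p with
  | nil => exact absurd rfl hxy
  | cons h q =>
    obtain rfl := (adj_inr_iff f x _).1 h
    have hsub : {k | .inl k ∈ q.support} ⊆ {k | .inl k ∈ (Walk.cons h q).support} :=
      fun k hk => List.mem_cons_of_mem _ hk
    rcases (sweeps_support f q ((Walk.cons_isPath_iff _ _).1 hp).1).cyclicArc_subset with h | h
    · exact .inl (h.trans hsub)
    · exact .inr (h.trans hsub)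

lemma not_cycDisplays_of_lt {i₁ i₂ i₃ i₄ : ZMod m} (h₁₂ : i₁.val < i₂.val)
    (h₂₃ : i₂.val < i₃.val) (h₃₄ : i₃.val < i₄.val) :
    ¬ cycDisplays m f (f i₁) (f i₃) (f i₂) (f i₄) := by
  have hne : ∀ {i k : ZMod m}, i.val < k.val → f i ≠ f k :=
    fun h => f.injective.ne (ne_of_apply_ne _ h.ne)
  rintro ⟨p, q, hp, hq, hpq⟩
  have h₂ : .inl i₂ ∈ q.support := by
    simpa using inl_mem_support_of_ne f q (by simpa using (hne (h₂₃.trans h₃₄)).symm)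
  have h₄ : .inl i₄ ∈ q.support := by
    simpa using inl_mem_support_of_ne f q.reverse (by simpa using hne (h₂₃.trans h₃₄))
  rcases cyclicArc_subset_support f (hne (h₁₂.trans h₂₃)) p hp with hcov | hcov <;>
    simp only [Equiv.symm_apply_apply] at hcov
  · refine hpq _ (hcov ?_) h₂
    rw [mem_cyclicArc_iff]; split_ifs <;> omega
  · refine hpq _ (hcov ?_) h₄
    rw [mem_cyclicArc_iff]; split_ifs <;> omega

lemma connected : (cycNet m f).Connected := by
  refine (connected_iff_exists_forall_reachable _).2 ⟨.inl 0, ?_⟩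
  have hcycle : ∀ k : ZMod m, (cycNet m f).Reachable (.inl 0) (.inl k) := fun k =>
    ⟨(cycleWalk f k.val 0).copy rfl (by simp)⟩
  rintro (k | x)
  · exact hcycle k
  · exact (hcycle _).trans ((adj_inl_iff f (f.symm x) _).2 (.inr (.inr (by simp)))).reachable

lemma not_isBridge_cycle_edge (hm : 3 ≤ m) (i : ZMod m) :
    ¬ (cycNet m f).IsBridge s(.inl i, .inl (i + 1)) := by
  rw [isBridge_iff_forall_walk_mem_edges, not_forall]
  refine ⟨((cycleWalk f (m - 1) (i + 1)).copy rfl ?_).reverse, fun he => ?_⟩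
  · rw [Sum.inl.injEq, Nat.cast_sub (by omega), ZMod.natCast_self]; ring
  rw [Walk.edges_reverse, List.mem_reverse, Walk.edges_copy] at he
  obtain ⟨j, hj, he⟩ := mem_edges_cycleWalk f he
  rcases Sym2.eq_iff.1 he with ⟨h, -⟩ | ⟨h, h'⟩
  · have : ((j + 1 : ℕ) : ZMod m) = 0 := by push_cast; linear_combination -(Sum.inl.inj h)
    rw [ZMod.natCast_eq_zero_iff] at this
    exact absurd (Nat.le_of_dvd (by omega) this) (by omega)
  · have h₀ : ((j : ℕ) : ZMod m) = 0 := by linear_combination -(Sum.inl.inj h')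
    have h₂ : ((j + 2 : ℕ) : ZMod m) = 0 := by push_cast; linear_combination -(Sum.inl.inj h)
    rw [ZMod.natCast_eq_zero_iff] at h₀ h₂
    have : m ∣ 2 := (Nat.dvd_add_right h₀).1 h₂
    exact absurd (Nat.le_of_dvd (by omega) this) (by omega)

lemma reachable_deleteEdges_pendant {x y z : X} (hy : y ≠ x) (hz : z ≠ x) :
    ((cycNet m f).deleteEdges {s(.inl (f.symm x), .inr x)}).Reachable (.inr y) (.inr z) := by
  refine reachable_deleteEdges_iff_exists_walk.2 ⟨leafWalk f y z, fun he => ?_⟩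
  rcases mem_support_leafWalk f ((leafWalk f y z).snd_mem_support_of_mem_edges he) with
    h | h | ⟨_, -, h⟩
  · exact hy (Sum.inr.inj h).symm
  · exact hz (Sum.inr.inj h).symm
  · cases h

lemma edge_eq_cycle_or_pendant {u v : ZMod m ⊕ X} (h : (cycNet m f).Adj u v) :
    (∃ i, s(u, v) = s(.inl i, .inl (i + 1))) ∨ ∃ x, s(u, v) = s(.inl (f.symm x), .inr x) := by
  rcases u with i | x
  · rcases (adj_inl_iff f i v).1 h with rfl | rfl | rfl
    · exact .inl ⟨i, rfl⟩
    · exact .inl ⟨i - 1, by rw [sub_add_cancel, Sym2.eq_swap]⟩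
    · exact .inr ⟨f i, by simp⟩
  · obtain rfl := (adj_inr_iff f x v).1 h
    exact .inr ⟨x, Sym2.eq_swap⟩

lemma not_cycExhibits (hm : 3 ≤ m) {a b c d : X} (hab : a ≠ b) (hcd : c ≠ d) :
    ¬ cycExhibits m f a b c d := by
  rintro ⟨u, v, huv, hdisc, hab', hcd', hac'⟩
  rcases edge_eq_cycle_or_pendant f huv with ⟨i, he⟩ | ⟨x, he⟩ <;>
    rw [he] at hdisc hab' hcd' hac'
  · exact hdisc <|
      (connected f).connected_delete_edge_of_not_isBridge (not_isBridge_cycle_edge f hm i)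
  · have avoid : ∀ {y z : X}, y ≠ z →
        ((cycNet m f).deleteEdges {s(.inl (f.symm x), .inr x)}).Reachable (.inr y) (.inr z) →
        y ≠ x := by
      rintro y z hyz h rfl
      exact not_reachable_deleteEdges_pendant f hyz h
    exact hac' (reachable_deleteEdges_pendant f (avoid hab hab') (avoid hcd hcd'))

end cycNet

variable {a b c d : X}

lemma cycDisplays.swap_left (h : cycDisplays m f a b c d) : cycDisplays m f b a c d := by
  obtain ⟨p, q, hp, hq, hpq⟩ := h
  exact ⟨p.reverse, q, hp.reverse, hq, fun v hv => hpq v (by simpa using hv)⟩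

lemma cycDisplays.symm (h : cycDisplays m f a b c d) : cycDisplays m f c d a b := by
  obtain ⟨p, q, hp, hq, hpq⟩ := h
  exact ⟨q, p, hq, hp, fun v hq hp => hpq v hp hq⟩

lemma cycDisplays_of_not_linearInterleave [Fact (1 < m)] (hab : a ≠ b) (hac : a ≠ c)
    (had : a ≠ d) (hbc : b ≠ c) (hbd : b ≠ d) (hcd : c ≠ d)
    (h : ¬ LinearInterleave (f.symm a).val (f.symm b).val (f.symm c).val (f.symm d).val) :
    cycDisplays m f a b c d := by
  wlog hab' : (f.symm a).val < (f.symm b).val generalizing a b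
  · have hne := val_symm_ne_of_ne f hab
    exact (this hab.symm hbc hbd hac had (by rwa [LinearInterleave, Set.uIoo_comm])
      (by omega)).swap_left
  wlog hcd' : (f.symm c).val < (f.symm d).val generalizing c d
  · have hne := val_symm_ne_of_ne f hcd
    exact (this hcd.symm had hac hbd hbc (by rwa [LinearInterleave, _root_.xor_comm])
      (by omega)).symm.swap_left.symm
  have := val_symm_ne_of_ne f hac
  have := val_symm_ne_of_ne f had
  have := val_symm_ne_of_ne f hbc
  have := val_symm_ne_of_ne f hbd
  simp only [LinearInterleave, Xor, ← Set.Ioo_min_max, Set.mem_Ioo] at h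
  obtain h' | h' | h' :
      ((f.symm a).val < (f.symm c).val ∧ (f.symm d).val < (f.symm b).val) ∨
      ((f.symm d).val < (f.symm a).val ∨ (f.symm b).val < (f.symm c).val) ∨
      ((f.symm c).val < (f.symm a).val ∧ (f.symm b).val < (f.symm d).val) := by omega
  · refine (cycNet.cycDisplays_of_disjoint f hab.symm hcd
      (Set.disjoint_left.2 fun k hk hk' => ?_)).swap_left
    rw [mem_cyclicArc_iff] at hk hk'
    split_ifs at hk hk' <;> omega
  · refine cycNet.cycDisplays_of_disjoint f hab hcd (Set.disjoint_left.2 fun k hk hk' => ?_)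
    rw [mem_cyclicArc_iff] at hk hk'
    split_ifs at hk hk' <;> omega
  · refine (cycNet.cycDisplays_of_disjoint f hab hcd.symm
      (Set.disjoint_left.2 fun k hk hk' => ?_)).symm.swap_left.symm
    rw [mem_cyclicArc_iff] at hk hk'
    split_ifs at hk hk' <;> omega

end

section

omit [Fintype X]

variable {m : ℕ} (f : ZMod m ≃ X) {a b c d : X}

lemma cycDisplays_congr_pairs {a' b' c' d' : X} (hab : ({a, b} : Finset X) = {a', b'})
    (hcd : ({c, d} : Finset X) = {c', d'}) :
    cycDisplays m f a b c d ↔ cycDisplays m f a' b' c' d' := by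
  have swap_right : ∀ {a b c d : X}, cycDisplays m f a b c d → cycDisplays m f a b d c :=
    fun h => h.symm.swap_left.symm
  rw [Finset.pair_eq_pair_iff] at hab hcd
  constructor <;> intro h <;> rcases hab with ⟨rfl, rfl⟩ | ⟨rfl, rfl⟩ <;>
    rcases hcd with ⟨rfl, rfl⟩ | ⟨rfl, rfl⟩ <;>
    first | exact h | exact h.swap_left | exact swap_right h | exact swap_right h.swap_left

lemma Interleaves.symm (h : Interleaves f a b c d) : Interleaves f c d a b := by
  obtain ⟨i₁, i₂, i₃, i₄, h₁₂, h₂₃, h₃₄, h⟩ := h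
  exact ⟨i₁, i₂, i₃, i₄, h₁₂, h₂₃, h₃₄, h.symm⟩

lemma interleaves_congr_pairs {a' b' c' d' : X} (hab : ({a, b} : Finset X) = {a', b'})
    (hcd : ({c, d} : Finset X) = {c', d'}) :
    Interleaves f a b c d ↔ Interleaves f a' b' c' d' := by
  rw [Interleaves, Interleaves, hab, hcd]

lemma not_cycDisplays_of_interleaves [Fact (1 < m)] (h : Interleaves f a b c d) :
    ¬ cycDisplays m f a b c d := by
  obtain ⟨i₁, i₂, i₃, i₄, h₁₂, h₂₃, h₃₄, ⟨hab, hcd⟩ | ⟨hcd, hab⟩⟩ := h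
  · rw [← cycDisplays_congr_pairs f hab hcd]
    exact cycNet.not_cycDisplays_of_lt f h₁₂ h₂₃ h₃₄
  · exact fun hD =>
      cycNet.not_cycDisplays_of_lt f h₁₂ h₂₃ h₃₄ ((cycDisplays_congr_pairs f hcd hab).2 hD.symm)

lemma interleaves_of_lt (h₁ : (f.symm a).val < (f.symm c).val)
    (h₂ : (f.symm c).val < (f.symm b).val) (h₃ : (f.symm b).val < (f.symm d).val) :
    Interleaves f a b c d :=
  ⟨_, _, _, _, h₁, h₂, h₃, .inl ⟨by simp, by simp⟩⟩

lemma linearInterleave_of_interleaves (h : Interleaves f a b c d) :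
    LinearInterleave (f.symm a).val (f.symm b).val (f.symm c).val (f.symm d).val := by
  obtain ⟨i₁, i₂, i₃, i₄, h₁₂, h₂₃, h₃₄, ⟨hab, hcd⟩ | ⟨hcd, hab⟩⟩ := h <;>
    rw [Finset.pair_eq_pair_iff] at hab hcd <;>
    rcases hab with ⟨rfl, rfl⟩ | ⟨rfl, rfl⟩ <;> rcases hcd with ⟨rfl, rfl⟩ | ⟨rfl, rfl⟩ <;>
    simp only [LinearInterleave, Xor, ← Set.Ioo_min_max, Set.mem_Ioo, Equiv.symm_apply_apply] <;>
    omega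

lemma interleaves_of_linearInterleave [NeZero m] (hac : a ≠ c) (had : a ≠ d) (hbc : b ≠ c)
    (hbd : b ≠ d)
    (h : LinearInterleave (f.symm a).val (f.symm b).val (f.symm c).val (f.symm d).val) :
    Interleaves f a b c d := by
  wlog hab : (f.symm a).val ≤ (f.symm b).val generalizing a b
  · rw [interleaves_congr_pairs f (Finset.pair_comm a b) rfl]
    exact this hbc hbd hac had (by rwa [LinearInterleave, Set.uIoo_comm]) (by omega)
  wlog hcd : (f.symm c).val ≤ (f.symm d).val generalizing c d
  · rw [interleaves_congr_pairs f rfl (Finset.pair_comm c d)]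
    exact this had hac hbd hbc (by rwa [LinearInterleave, _root_.xor_comm]) (by omega)
  have := val_symm_ne_of_ne f hac
  have := val_symm_ne_of_ne f hbd
  simp only [LinearInterleave, Xor, ← Set.Ioo_min_max, Set.mem_Ioo] at h
  obtain ⟨h₁, h₂, h₃⟩ | ⟨h₁, h₂, h₃⟩ :
      ((f.symm a).val < (f.symm c).val ∧ (f.symm c).val < (f.symm b).val ∧
        (f.symm b).val < (f.symm d).val) ∨
      ((f.symm c).val < (f.symm a).val ∧ (f.symm a).val < (f.symm d).val ∧
        (f.symm d).val < (f.symm b).val) := by omega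
  · exact interleaves_of_lt f h₁ h₂ h₃
  · exact (interleaves_of_lt f h₁ h₂ h₃).symm

lemma cycDisplays_iff_not_interleaves [Fact (1 < m)] (hab : a ≠ b) (hac : a ≠ c) (had : a ≠ d)
    (hbc : b ≠ c) (hbd : b ≠ d) (hcd : c ≠ d) :
    cycDisplays m f a b c d ↔ ¬ Interleaves f a b c d :=
  ⟨fun hD hI => not_cycDisplays_of_interleaves f hI hD, fun hI =>
    cycDisplays_of_not_linearInterleave f hab hac had hbc hbd hcd
      (fun hL => hI (interleaves_of_linearInterleave f hac had hbc hbd hL))⟩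

lemma cycDisplays_iff_not_linearInterleave [Fact (1 < m)] (hab : a ≠ b) (hac : a ≠ c)
    (had : a ≠ d) (hbc : b ≠ c) (hbd : b ≠ d) (hcd : c ≠ d) :
    cycDisplays m f a b c d ↔
      ¬ LinearInterleave (f.symm a).val (f.symm b).val (f.symm c).val (f.symm d).val :=
  (cycDisplays_iff_not_interleaves f hab hac had hbc hbd hcd).trans <| not_congr
    ⟨linearInterleave_of_interleaves f, interleaves_of_linearInterleave f hac had hbc hbd⟩

end

theorem cycleType_displays_iff_noninterleaving_general (m : ℕ) (hm : 4 ≤ m)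
    (f : ZMod m ≃ X) (a b c d : X)
    (h : ([a, b, c, d] : List X).Nodup) :
    (cycDisplays m f a b c d ↔ ¬ Interleaves f a b c d) ∧
    ¬ cycExhibits m f a b c d ∧
    ((cycDisplays m f a b c d ∧ cycDisplays m f a c b d ∧
        ¬ cycDisplays m f a d b c) ∨
     (cycDisplays m f a b c d ∧ ¬ cycDisplays m f a c b d ∧
        cycDisplays m f a d b c) ∨
     (¬ cycDisplays m f a b c d ∧ cycDisplays m f a c b d ∧
        cycDisplays m f a d b c)) := by
  have : Fact (1 < m) := ⟨by omega⟩
  simp only [List.nodup_cons, List.mem_cons, List.not_mem_nil, or_false, not_or,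
    List.nodup_nil, and_true] at h
  obtain ⟨⟨hab, hac, had⟩, ⟨hbc, hbd⟩, hcd, -⟩ := h
  refine ⟨cycDisplays_iff_not_interleaves f hab hac had hbc hbd hcd,
    cycNet.not_cycExhibits f (by omega) hab hcd, ?_⟩
  rw [cycDisplays_iff_not_linearInterleave f hab hac had hbc hbd hcd,
    cycDisplays_iff_not_linearInterleave f hac hab had (Ne.symm hbc) hcd hbd,
    cycDisplays_iff_not_linearInterleave f had hab hac (Ne.symm hbd) (Ne.symm hcd) hbc]
  have := linearInterleave_exactly_one (val_symm_ne_of_ne f hab) (val_symm_ne_of_ne f hac)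
    (val_symm_ne_of_ne f had) (val_symm_ne_of_ne f hbc) (val_symm_ne_of_ne f hbd)
    (val_symm_ne_of_ne f hcd)
  tauto

/-- A cycle-type network on X, |X| ≥ 4, displays exactly the quartets whose
    pairs do not interleave on the cycle, exhibits no quartet, and for each
    4-subset displays exactly two of the three quartets. -/
theorem cycleType_displays_iff_noninterleaving (m : ℕ) (hm : 4 ≤ m)
    (hcard : Fintype.card X = m) (f : ZMod m ≃ X) (a b c d : X)
    (h : ([a, b, c, d] : List X).Nodup) :
    (cycDisplays m f a b c d ↔ ¬ Interleaves f a b c d) ∧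
    ¬ cycExhibits m f a b c d ∧
    ((cycDisplays m f a b c d ∧ cycDisplays m f a c b d ∧
        ¬ cycDisplays m f a d b c) ∨
     (cycDisplays m f a b c d ∧ ¬ cycDisplays m f a c b d ∧
        cycDisplays m f a d b c) ∨
     (¬ cycDisplays m f a b c d ∧ cycDisplays m f a c b d ∧
        cycDisplays m f a d b c)) :=
  cycleType_displays_iff_noninterleaving_general m hm f a b c d h
end

section
/- The qnet inference rule (CL3) is sound: if a binary level-1 network N on X displays the Type IV qnets with circular leaf orders (a,b,c,d) and (e,a,c,d), then N displays the Type IV qnet with circular order (a,b,d,e). -/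
variable {X : Type*} [Fintype X] [DecidableEq X]

/-- Level-1 property of a graph: any two cycles meeting in a vertex have the
    same vertex set (equivalently, every maximal cut-edge-free subgraph is a
    vertex or a cycle). -/
def Level1Prop {V : Type*} (G : SimpleGraph V) : Prop :=
  ∀ ⦃u : V⦄ (c : G.Walk u u), c.IsCycle → ∀ ⦃w : V⦄ (c' : G.Walk w w),
    c'.IsCycle → (∃ v, v ∈ c.support ∧ v ∈ c'.support) →
      ∀ v, v ∈ c.support ↔ v ∈ c'.support

/-- A binary level-1 phylogenetic network on X: a finite connected graph with
    all degrees 1 or 3, whose degree-1 vertices are exactly (a copy of) X,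
    satisfying the level-1 condition. -/
structure BLvl1 (X : Type*) where
  V : Type*
  [fV : Fintype V]
  G : SimpleGraph V
  conn : G.Connected
  leaf : X ↪ V
  deg_leaf : ∀ x : X, (G.neighborSet (leaf x)).ncard = 1
  leaf_of_deg : ∀ v : V, (G.neighborSet v).ncard = 1 → ∃ x, leaf x = v
  binary : ∀ v : V, (G.neighborSet v).ncard = 1 ∨ (G.neighborSet v).ncard = 3
  level1 : Level1Prop G

attribute [instance] BLvl1.fV

namespace BLvl1

variable (N : BLvl1 X)

/-- Some cut-edge of N separates leaves a, b from leaves c, d. -/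
def cutSep (a b c d : X) : Prop :=
  ∃ u v : N.V, N.G.Adj u v ∧
    ¬ (N.G.deleteEdges {s(u, v)}).Connected ∧
    (N.G.deleteEdges {s(u, v)}).Reachable (N.leaf a) (N.leaf b) ∧
    (N.G.deleteEdges {s(u, v)}).Reachable (N.leaf c) (N.leaf d) ∧
    ¬ (N.G.deleteEdges {s(u, v)}).Reachable (N.leaf a) (N.leaf c)

/-- Deleting vertex v separates the leaves p, q, r pairwise. -/
def sep3 (v : N.V) (p q r : X) : Prop :=
  ∃ (hp : N.leaf p ≠ v) (hq : N.leaf q ≠ v) (hr : N.leaf r ≠ v),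
    ¬ (N.G.induce {w | w ≠ v}).Reachable ⟨N.leaf p, hp⟩ ⟨N.leaf q, hq⟩ ∧
    ¬ (N.G.induce {w | w ≠ v}).Reachable ⟨N.leaf p, hp⟩ ⟨N.leaf r, hr⟩ ∧
    ¬ (N.G.induce {w | w ≠ v}).Reachable ⟨N.leaf q, hq⟩ ⟨N.leaf r, hr⟩

/-- The trinet of N on the leaves p, q, r is of cycle type: no single vertex
    separates p, q, r pairwise. -/
def cycTriple (p q r : X) : Prop := ¬ ∃ v : N.V, N.sep3 v p q r

/-- N contains vertex-disjoint paths a–b and c–d (the quartet ab|cd is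
    displayed). -/
def dpaths (a b c d : X) : Prop :=
  ∃ (p : N.G.Walk (N.leaf a) (N.leaf b)) (q : N.G.Walk (N.leaf c) (N.leaf d)),
    p.IsPath ∧ q.IsPath ∧ ∀ v, v ∈ p.support → v ∉ q.support

/-- N displays the qnet F, i.e. the restriction of N to the support of F is
    isomorphic to F: for tree-type qnets this means the split is exhibited by a
    cut-edge and the 3-cycle decorations match the cycle-type of the
    corresponding trinets; for Type IV qnets, no split on the support is
    exhibited and the displayed quartets on the support are exactly the two
    that do not cross the 4-cycle. -/
def displays (F : Qnet X) : Prop :=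
  (∃ (s t : Bool) (a b c d : X), ([a, b, c, d] : List X).Nodup ∧
    F = qT s t a b c d ∧ N.cutSep a b c d ∧
    (N.cycTriple a b c ↔ s = true) ∧ (N.cycTriple c d a ↔ t = true)) ∨
  (∃ a b c d : X, ([a, b, c, d] : List X).Nodup ∧ F = qIV a b c d ∧
    ¬ N.cutSep a b c d ∧ ¬ N.cutSep a c b d ∧ ¬ N.cutSep a d b c ∧
    N.dpaths a b c d ∧ N.dpaths a d b c ∧ ¬ N.dpaths a c b d)

end BLvl1

/-- F(N): the qnet system displayed by N. -/
def FN (N : BLvl1 X) : Set (Qnet X) := {q | N.displays q}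

/-- Whether the restriction of the qnet q to the 3-element subset Y of its
    support is of cycle type. -/
def triCyc (q : Qnet X) (Y : Finset X) : Prop :=
  (∃ (s t : Bool) (a b c d : X), q = qT s t a b c d ∧
    (((Y = {a, b, c} ∨ Y = {a, b, d}) ∧ s = true) ∨
     ((Y = {a, c, d} ∨ Y = {b, c, d}) ∧ t = true))) ∨
  (∃ a b c d : X, q = qIV a b c d ∧ Y.card = 3 ∧
    (↑Y : Set X) ⊆ {a, b, c, d})

/-- F is consistent: any two qnets in F agree, up to isomorphism, on every
    common 3-element subset of their supports. -/
def Consistent (F : Set (Qnet X)) : Prop :=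
  ∀ q ∈ F, ∀ q' ∈ F, ∀ Y : Finset X, Y.card = 3 →
    (↑Y : Set X) ⊆ q.supp → (↑Y : Set X) ⊆ q'.supp → (triCyc q Y ↔ triCyc q' Y)

/-- Isomorphism of binary level-1 networks on X: a graph isomorphism
    restricting to the identity on X. -/
def NetIsom (N N' : BLvl1 X) : Prop :=
  ∃ e : N.G ≃g N'.G, ∀ x : X, e (N.leaf x) = N'.leaf x


/-!
From the disjoint paths witnessing that `N` displays the 4-cycle `(a,b,c,d)` one extracts a
subdivided copy of it in `N`: a cycle `C` through corners `za, zb, zc, zd` in this order, with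
disjoint legs from the leaves `a, b, c, d` to the corners. Since `N` is level-1, the legs from a
vertex to `C` all end at the same attachment point, and a walk between two leaves with distinct
attachments passes through both and runs along one of the two arcs of `C` between them.
The disjoint paths `e–a | c–d` and `e–d | a–c` displayed by the 4-cycle `(e,a,c,d)` therefore
force the attachment of `e` into the interior of the arc from `zd` to `za`. Dropping the corner
`zc` and adding this attachment as a corner yields a subdivided 4-cycle `(a,b,d,e)`, and every
subdivided 4-cycle is displayed.
-/

namespace SimpleGraph

variable {V : Type*} {G : SimpleGraph V} {u u' v w w' x y z : V}

namespace Walk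

theorem IsPath.eq_of_mem_takeUntil_of_mem_dropUntil [DecidableEq V] {p : G.Walk x y}
    (hp : p.IsPath) (hu : u ∈ p.support) (h₁ : v ∈ (p.takeUntil u hu).support)
    (h₂ : v ∈ (p.dropUntil u hu).support) : v = u := by
  have hnd := hp.support_nodup
  rw [← p.take_spec hu, support_append, List.nodup_append] at hnd
  rw [← cons_tail_support, List.mem_cons] at h₂
  exact h₂.resolve_right fun h => hnd.2.2 v h₁ v h rfl

theorem mem_support_iff_mem_takeUntil_or_mem_dropUntil [DecidableEq V] (p : G.Walk x y)
    (hu : u ∈ p.support) :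
    v ∈ p.support ↔ v ∈ (p.takeUntil u hu).support ∨ v ∈ (p.dropUntil u hu).support := by
  conv_lhs => rw [← p.take_spec hu]
  exact mem_support_append_iff _ _

theorem IsPath.start_notMem_support_tail {p : G.Walk x y} (hp : p.IsPath) :
    x ∉ p.support.tail :=
  (List.nodup_cons.mp (p.cons_tail_support ▸ hp.support_nodup)).1

theorem IsPath.append {p : G.Walk x y} {q : G.Walk y z} (hp : p.IsPath) (hq : q.IsPath)
    (h : ∀ v ∈ p.support, v ∈ q.support → v = y) : (p.append q).IsPath := by
  rw [isPath_def, support_append]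
  refine hp.support_nodup.append (hq.support_nodup.sublist q.support.tail_sublist) ?_
  intro v hvp hvq
  exact hq.start_notMem_support_tail (h v hvp (List.mem_of_mem_tail hvq) ▸ hvq)

theorem IsPath.isCycle_append_of_inter {p : G.Walk x y} {q : G.Walk y x} (hp : p.IsPath)
    (hq : q.IsPath) (h : ∀ v ∈ p.support, v ∈ q.support → v = x ∨ v = y)
    (hn : 1 < p.length ∨ 1 < q.length) : (p.append q).IsCycle := by
  refine hp.isCycle_append hq (fun v hvp hvq => ?_) hn
  rcases h v (List.mem_of_mem_tail hvp) (List.mem_of_mem_tail hvq) with rfl | rfl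
  · exact hp.start_notMem_support_tail hvp
  · exact hq.start_notMem_support_tail hvq

theorem exists_isPath_support_subset [DecidableEq V] (p : G.Walk x y) (hu : u ∈ p.support)
    (hv : v ∈ p.support) : ∃ q : G.Walk u v, q.IsPath ∧ q.support ⊆ p.support := by
  refine ⟨((p.takeUntil u hu).reverse.append (p.takeUntil v hv)).bypass, bypass_isPath _, ?_⟩
  refine List.Subset.trans (support_bypass_subset_support _) fun w hw => ?_
  rw [mem_support_append_iff, support_reverse, List.mem_reverse] at hw
  exact hw.elim (fun h => support_takeUntil_subset_support _ _ h)
    (fun h => support_takeUntil_subset_support _ _ h)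

theorem mem_support_takeUntil_or [DecidableEq V] (p : G.Walk x y) (hu : u ∈ p.support)
    (hv : v ∈ p.support) : u ∈ (p.takeUntil v hv).support ∨ v ∈ (p.takeUntil u hu).support := by
  induction p with
  | nil =>
    rw [mem_support_nil_iff] at hu hv
    subst hu hv
    exact Or.inl (start_mem_support _)
  | @cons a b c hadj q ih =>
    by_cases hua : u = a
    · subst hua; exact Or.inl (start_mem_support _)
    by_cases hva : v = a
    · subst hva; exact Or.inr (start_mem_support _)
    have hu' : u ∈ q.support := by simpa [hua] using hu
    have hv' : v ∈ q.support := by simpa [hva] using hv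
    rw [takeUntil_cons hv' (Ne.symm hva), takeUntil_cons hu' (Ne.symm hua), support_cons,
      support_cons, List.mem_cons, List.mem_cons]
    exact (ih hu' hv').imp Or.inr Or.inr

theorem disjoint_edges_of_disjoint_support {p : G.Walk u v} {q : G.Walk x y}
    (h : p.support.Disjoint q.support) : p.edges.Disjoint q.edges := by
  intro e hp hq
  induction e with
  | _ a b => exact h (p.fst_mem_support_of_mem_edges hp) (q.fst_mem_support_of_mem_edges hq)

theorem end_ne_end_of_disjoint_support {x y z₁ z₂ : V} {p : G.Walk x z₁} {q : G.Walk y z₂}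
    (h : p.support.Disjoint q.support) : z₁ ≠ z₂ :=
  fun he => h p.end_mem_support (he ▸ q.end_mem_support)

structure IsLeg (L : G.Walk x z) (S : Set V) : Prop where
  isPath : L.IsPath
  end_mem : z ∈ S
  eq_end : ∀ v ∈ L.support, v ∈ S → v = z

theorem IsLeg.dropUntil [DecidableEq V] {L : G.Walk x z} {S : Set V} (hL : L.IsLeg S)
    (hv : v ∈ L.support) : (L.dropUntil v hv).IsLeg S :=
  ⟨hL.isPath.dropUntil hv, hL.end_mem,
    fun w hw hwS => hL.eq_end w (support_dropUntil_subset_support _ hv hw) hwS⟩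

theorem IsLeg.congr {L : G.Walk x z} {S T : Set V} (hL : L.IsLeg S)
    (h : ∀ v, v ∈ S ↔ v ∈ T) : L.IsLeg T := by
  rwa [show S = T from Set.ext h] at hL

theorem exists_isLeg (p : G.Walk x y) {S : Set V} (hy : y ∈ S) :
    ∃ z, ∃ L : G.Walk x z, L.IsLeg S ∧ L.support ⊆ p.support := by
  classical
  suffices h : ∃ z ∈ S, ∃ L : G.Walk x z, (∀ v ∈ L.support, v ∈ S → v = z) ∧
      L.support ⊆ p.support by
    obtain ⟨z, hz, L, hLS, hLp⟩ := h
    refine ⟨z, L.bypass, ⟨bypass_isPath _, hz, fun v hv => hLS v ?_⟩,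
      List.Subset.trans (support_bypass_subset_support _) hLp⟩
    exact support_bypass_subset_support _ hv
  induction p with
  | nil => exact ⟨_, hy, nil, by simp, List.Subset.refl _⟩
  | @cons a b c hadj q ih =>
    by_cases ha : a ∈ S
    · exact ⟨a, ha, nil, by simp, by simp⟩
    · obtain ⟨z, hz, L, hLS, hLq⟩ := ih hy
      refine ⟨z, hz, cons hadj L, ?_, ?_⟩
      · simpa [ha] using hLS
      · simpa using List.cons_subset_cons a hLq

theorem exists_isLeg_reverse_isLeg (p : G.Walk x y) {S T : Set V} (hx : x ∈ S) (hy : y ∈ T) :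
    ∃ u w, ∃ M : G.Walk u w, M.IsLeg T ∧ M.reverse.IsLeg S ∧ M.support ⊆ p.support := by
  obtain ⟨w, L, hL, hLp⟩ := p.exists_isLeg hy
  obtain ⟨u, L', hL', hL'L⟩ := L.reverse.exists_isLeg (S := S) hx
  have hsub : L'.reverse.support ⊆ L.support := by simpa using hL'L
  exact ⟨u, w, L'.reverse, ⟨hL'.isPath.reverse, hL.end_mem, fun v hv => hL.eq_end v (hsub hv)⟩,
    by simpa using hL', List.Subset.trans hsub hLp⟩

structure PathSplit (P : G.Walk x y) (u u' : V) where
  head : G.Walk x u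
  mid : G.Walk u u'
  tail : G.Walk u' y
  head_isPath : head.IsPath
  mid_isPath : mid.IsPath
  tail_isPath : tail.IsPath
  head_subset : head.support ⊆ P.support
  mid_subset : mid.support ⊆ P.support
  tail_subset : tail.support ⊆ P.support
  head_inter_mid : ∀ v ∈ head.support, v ∈ mid.support → v = u
  head_disjoint_tail : head.support.Disjoint tail.support
  mid_inter_tail : ∀ v ∈ mid.support, v ∈ tail.support → v = u'

def IsPath.pathSplit [DecidableEq V] {P : G.Walk x y} (hP : P.IsPath) (hu' : u' ∈ P.support)
    (hu : u ∈ (P.takeUntil u' hu').support) (hne : u ≠ u') : P.PathSplit u u' where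
  head := (P.takeUntil u' hu').takeUntil u hu
  mid := (P.takeUntil u' hu').dropUntil u hu
  tail := P.dropUntil u' hu'
  head_isPath := (hP.takeUntil hu').takeUntil hu
  mid_isPath := (hP.takeUntil hu').dropUntil hu
  tail_isPath := hP.dropUntil hu'
  head_subset := List.Subset.trans (support_takeUntil_subset_support _ hu)
    (support_takeUntil_subset_support _ hu')
  mid_subset := List.Subset.trans (support_dropUntil_subset_support _ hu)
    (support_takeUntil_subset_support _ hu')
  tail_subset := support_dropUntil_subset_support _ hu'
  head_inter_mid _ h₁ h₂ := (hP.takeUntil hu').eq_of_mem_takeUntil_of_mem_dropUntil hu h₁ h₂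
  head_disjoint_tail v h₁ h₃ := by
    have hv := support_takeUntil_subset_support _ hu h₁
    rw [hP.eq_of_mem_takeUntil_of_mem_dropUntil hu' hv h₃] at h₁
    exact hne ((hP.takeUntil hu').eq_of_mem_takeUntil_of_mem_dropUntil hu h₁
      (end_mem_support _)).symm
  mid_inter_tail _ h₂ h₃ :=
    hP.eq_of_mem_takeUntil_of_mem_dropUntil hu' (support_dropUntil_subset_support _ hu h₂) h₃

theorem IsCycle.reachable_deleteEdges {C : G.Walk u u} (hC : C.IsCycle) (f : Sym2 V)
    (hx : x ∈ C.support) (hy : y ∈ C.support) : (G.deleteEdges {f}).Reachable x y := by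
  classical
  set K := C.rotate x hx
  have hyK : y ∈ K.support := (mem_support_rotate_iff C x hx).mpr hy
  have hK : K.edges.Nodup := (rotate_edges C x hx).perm.nodup_iff.mpr hC.edges_nodup
  rw [← take_spec K hyK, edges_append, List.nodup_append] at hK
  by_cases hf : f ∈ (K.takeUntil y hyK).edges
  · exact ⟨((K.dropUntil y hyK).toDeleteEdge f fun h => hK.2.2 f hf f h rfl).reverse⟩
  · exact ⟨(K.takeUntil y hyK).toDeleteEdge f hf⟩

theorem IsCycle.reachable_deleteEdges_of_walks {C : G.Walk u u} (hC : C.IsCycle)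
    (f : Sym2 V) {z₁ z₂ : V} {L₁ : G.Walk x z₁} {L₂ : G.Walk y z₂} (h₁ : z₁ ∈ C.support)
    (h₂ : z₂ ∈ C.support) (hf₁ : f ∉ L₁.edges) (hf₂ : f ∉ L₂.edges) :
    (G.deleteEdges {f}).Reachable x y :=
  (L₁.toDeleteEdge f hf₁).reachable.trans
    ((hC.reachable_deleteEdges f h₁ h₂).trans (L₂.toDeleteEdge f hf₂).reverse.reachable)

theorem IsCycle.reachable_deleteEdges_of_reachable {C : G.Walk u u} (hC : C.IsCycle)
    (f : Sym2 V) {v₁ v₂ v₃ v₄ z₁ z₂ z₃ z₄ : V} {L₁ : G.Walk v₁ z₁} {L₂ : G.Walk v₂ z₂}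
    {L₃ : G.Walk v₃ z₃} {L₄ : G.Walk v₄ z₄} (h₁ : z₁ ∈ C.support) (h₂ : z₂ ∈ C.support)
    (h₃ : z₃ ∈ C.support) (h₄ : z₄ ∈ C.support) (h₁₂ : L₁.support.Disjoint L₂.support)
    (h₁₃ : L₁.support.Disjoint L₃.support) (h₃₄ : L₃.support.Disjoint L₄.support)
    (r₁₂ : (G.deleteEdges {f}).Reachable v₁ v₂) (r₃₄ : (G.deleteEdges {f}).Reachable v₃ v₄) :
    (G.deleteEdges {f}).Reachable v₁ v₃ := by
  by_cases hf₁ : f ∈ L₁.edges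
  · exact r₁₂.trans (hC.reachable_deleteEdges_of_walks f h₂ h₃
      (disjoint_edges_of_disjoint_support h₁₂ hf₁)
      (disjoint_edges_of_disjoint_support h₁₃ hf₁))
  by_cases hf₃ : f ∈ L₃.edges
  · exact (hC.reachable_deleteEdges_of_walks f h₁ h₄ hf₁
      (disjoint_edges_of_disjoint_support h₃₄ hf₃)).trans r₃₄.symm
  exact hC.reachable_deleteEdges_of_walks f h₁ h₃ hf₁ hf₃

end Walk

open Walk

namespace Level1Prop

variable {C : G.Walk u u}

theorem eq_of_isLeg (lvl : Level1Prop G) (hC : C.IsCycle) {z₁ z₂ : V} {L₁ : G.Walk v z₁}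
    {L₂ : G.Walk v z₂} (h₁ : L₁.IsLeg {w | w ∈ C.support}) (h₂ : L₂.IsLeg {w | w ∈ C.support}) :
    z₁ = z₂ := by
  classical
  by_contra hne
  obtain ⟨J, hJ, hJC, hJe⟩ : ∃ J : G.Walk z₁ z₂, J.IsPath ∧
      (∀ w ∈ J.support, w ∈ C.support → w = z₁ ∨ w = z₂) ∧ s(z₁, z₂) ∉ J.edges := by
    refine ⟨(L₁.reverse.append L₂).bypass, bypass_isPath _, fun w hw hwC => ?_, fun he => ?_⟩
    · have := support_bypass_subset_support _ hw
      rw [mem_support_append_iff, support_reverse, List.mem_reverse] at this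
      exact this.imp (h₁.eq_end w · hwC) (h₂.eq_end w · hwC)
    · have := edges_bypass_subset_edges _ he
      rw [edges_append, List.mem_append, edges_reverse, List.mem_reverse] at this
      rcases this with h | h
      · exact hne (h₁.eq_end _ (L₁.snd_mem_support_of_mem_edges h) h₂.end_mem).symm
      · exact hne (h₂.eq_end _ (L₂.fst_mem_support_of_mem_edges h) h₁.end_mem)
  cases J with
  | nil => exact hne rfl
  | @cons _ m _ hadj J' =>
    -- the second vertex `m` of `J` lies off `C`, yet `J` and an arc of `C` form a cycle
    have hm : m ∉ C.support := fun hmC => by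
      rcases hJC m (by simp) hmC with h | rfl
      · exact hadj.ne h.symm
      · exact hJe (by simp)
    have hlen : 1 < (cons hadj J').length := by
      cases J' with
      | nil => exact absurd h₂.end_mem hm
      | cons => simp
    obtain ⟨B, hB, hBC⟩ := C.exists_isPath_support_subset h₂.end_mem h₁.end_mem
    have hK := hJ.isCycle_append_of_inter hB (fun w hw hwB => hJC w hw (hBC hwB)) (Or.inl hlen)
    exact hm ((lvl _ hK C hC ⟨z₁, by simp, h₁.end_mem⟩ m).mp (by simp))

theorem eq_of_isPath (lvl : Level1Prop G) (hC : C.IsCycle) {p q : G.Walk x y} (hp : p.IsPath)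
    (hq : q.IsPath) (hpC : ∀ w ∈ p.support, w ∈ C.support) {m : V} (hm : m ∈ C.support)
    (hmp : m ∉ p.support) (hmq : m ∉ q.support) : p = q := by
  by_contra hne
  obtain ⟨w, hwp, -, K, hK, hKpq⟩ := hp.exists_isCycle_sublist_of_ne hq hne
  have hmK := (lvl K hK C hC ⟨w, K.start_mem_support, hpC w hwp⟩ m).mpr hm
  rcases List.mem_append.mp (hKpq.subset hmK) with h | h
  · exact hmp h
  · exact hmq (List.mem_reverse.mp (List.mem_of_mem_tail h))

theorem mem_support_of_isLeg (lvl : Level1Prop G) (hC : C.IsCycle) {zx zy : V}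
    {Lx : G.Walk x zx} {Ly : G.Walk y zy} (hLx : Lx.IsLeg {w | w ∈ C.support})
    (hLy : Ly.IsLeg {w | w ∈ C.support}) (hne : zx ≠ zy) (p : G.Walk x y) : zx ∈ p.support := by
  -- the first vertex of `C` along `p` followed by `Ly` is an attachment of `x`, hence `zx`
  obtain ⟨z, L, hL, hLp⟩ := (p.append Ly).exists_isLeg hLy.end_mem
  have hz : z = zx := eq_of_isLeg lvl hC hL hLx
  rcases (mem_support_append_iff _ _).mp (hLp (end_mem_support L)) with h | h
  · exact hz ▸ h
  · exact absurd (hz.symm.trans (hLy.eq_end z h hL.end_mem)) hne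

theorem mem_support_of_isLeg_of_isLeg (lvl : Level1Prop G) (hC : C.IsCycle) {zx zy : V}
    {Lx : G.Walk x zx} {Ly : G.Walk y zy} (hLx : Lx.IsLeg {w | w ∈ C.support})
    (hLy : Ly.IsLeg {w | w ∈ C.support}) (hne : zx ≠ zy) (p : G.Walk x y) :
    zx ∈ p.support ∧ zy ∈ p.support :=
  ⟨mem_support_of_isLeg lvl hC hLx hLy hne p,
    by simpa using mem_support_of_isLeg lvl hC hLy hLx hne.symm p.reverse⟩

theorem mem_or_support_subset (lvl : Level1Prop G) (hC : C.IsCycle) {zx zy m : V}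
    {Lx : G.Walk x zx} {Ly : G.Walk y zy} (hLx : Lx.IsLeg {w | w ∈ C.support})
    (hLy : Ly.IsLeg {w | w ∈ C.support}) (hne : zx ≠ zy) {arc : G.Walk zx zy}
    (harc : arc.IsPath) (harcC : ∀ w ∈ arc.support, w ∈ C.support) (hm : m ∈ C.support)
    (hmarc : m ∉ arc.support) (p : G.Walk x y) : m ∈ p.support ∨ arc.support ⊆ p.support := by
  classical
  obtain ⟨hx, hy⟩ := mem_support_of_isLeg_of_isLeg lvl hC hLx hLy hne p
  obtain ⟨q, hq, hqp⟩ := p.exists_isPath_support_subset hx hy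
  by_cases hmq : m ∈ q.support
  · exact Or.inl (hqp hmq)
  · rw [eq_of_isPath lvl hC harc hq harcC hm hmarc hmq]
    exact Or.inr hqp

theorem disjoint_support_of_isLeg (lvl : Level1Prop G) (hC : C.IsCycle) {zx zy : V}
    {Lx : G.Walk x zx} {Ly : G.Walk y zy} (hLx : Lx.IsLeg {w | w ∈ C.support})
    (hLy : Ly.IsLeg {w | w ∈ C.support}) (hne : zx ≠ zy) : Lx.support.Disjoint Ly.support := by
  classical
  exact fun v hvx hvy => hne (eq_of_isLeg lvl hC (hLx.dropUntil hvx) (hLy.dropUntil hvy))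

end Level1Prop

def DisjointPaths (G : SimpleGraph V) (a b c d : V) : Prop :=
  ∃ (p : G.Walk a b) (q : G.Walk c d), p.IsPath ∧ q.IsPath ∧ p.support.Disjoint q.support

namespace DisjointPaths

variable {a b c d a' b' c' d' : V}

theorem symm (h : G.DisjointPaths a b c d) : G.DisjointPaths c d a b :=
  let ⟨p, q, hp, hq, hpq⟩ := h
  ⟨q, p, hq, hp, hpq.symm⟩

theorem congr_left (h : G.DisjointPaths a b c d) (he : s(a, b) = s(a', b')) :
    G.DisjointPaths a' b' c d := by
  rcases Sym2.eq_iff.mp he with ⟨rfl, rfl⟩ | ⟨rfl, rfl⟩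
  · exact h
  · obtain ⟨p, q, hp, hq, hpq⟩ := h
    exact ⟨p.reverse, q, hp.reverse, hq, by simpa using hpq⟩

theorem congr (h : G.DisjointPaths a b c d)
    (he : s(s(a, b), s(c, d)) = s(s(a', b'), s(c', d'))) : G.DisjointPaths a' b' c' d' := by
  rcases Sym2.eq_iff.mp he with ⟨h₁, h₂⟩ | ⟨h₁, h₂⟩
  · exact ((h.congr_left h₁).symm.congr_left h₂).symm
  · exact (h.congr_left h₁).symm.congr_left h₂

end DisjointPaths

/-- A subdivision in `G` of the Type IV qnet with leaves `va, vb, vc, vd` in this circular order. -/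
structure QIVSubdivision (G : SimpleGraph V) (va vb vc vd : V) where
  za : V
  zb : V
  zc : V
  zd : V
  ab : G.Walk za zb
  bc : G.Walk zb zc
  cd : G.Walk zc zd
  da : G.Walk zd za
  la : G.Walk va za
  lb : G.Walk vb zb
  lc : G.Walk vc zc
  ld : G.Walk vd zd
  ab_isPath : ab.IsPath
  bc_isPath : bc.IsPath
  cd_isPath : cd.IsPath
  da_isPath : da.IsPath
  ab_inter_bc : ∀ v ∈ ab.support, v ∈ bc.support → v = zb
  bc_inter_cd : ∀ v ∈ bc.support, v ∈ cd.support → v = zc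
  cd_inter_da : ∀ v ∈ cd.support, v ∈ da.support → v = zd
  da_inter_ab : ∀ v ∈ da.support, v ∈ ab.support → v = za
  ab_disjoint_cd : ab.support.Disjoint cd.support
  bc_disjoint_da : bc.support.Disjoint da.support
  la_isLeg : la.IsLeg {v | v ∈ (ab.append (bc.append (cd.append da))).support}
  lb_isLeg : lb.IsLeg {v | v ∈ (ab.append (bc.append (cd.append da))).support}
  lc_isLeg : lc.IsLeg {v | v ∈ (ab.append (bc.append (cd.append da))).support}
  ld_isLeg : ld.IsLeg {v | v ∈ (ab.append (bc.append (cd.append da))).support}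
  la_disjoint_lb : la.support.Disjoint lb.support
  la_disjoint_lc : la.support.Disjoint lc.support
  la_disjoint_ld : la.support.Disjoint ld.support
  lb_disjoint_lc : lb.support.Disjoint lc.support
  lb_disjoint_ld : lb.support.Disjoint ld.support
  lc_disjoint_ld : lc.support.Disjoint ld.support

namespace QIVSubdivision

variable {va vb vc vd : V} (c : G.QIVSubdivision va vb vc vd)

def cycle : G.Walk c.za c.za := c.ab.append (c.bc.append (c.cd.append c.da))

theorem mem_support_cycle {v : V} : v ∈ c.cycle.support ↔
    v ∈ c.ab.support ∨ v ∈ c.bc.support ∨ v ∈ c.cd.support ∨ v ∈ c.da.support := by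
  simp only [cycle, mem_support_append_iff]

theorem isCycle : c.cycle.IsCycle := by
  have hcd : (c.cd.append c.da).IsPath := c.cd_isPath.append c.da_isPath c.cd_inter_da
  have hbc : (c.bc.append (c.cd.append c.da)).IsPath := by
    refine c.bc_isPath.append hcd fun v hb hv => ?_
    rcases (mem_support_append_iff _ _).mp hv with h | h
    · exact c.bc_inter_cd v hb h
    · exact (c.bc_disjoint_da hb h).elim
  refine c.ab_isPath.isCycle_append_of_inter hbc (fun v ha hv => ?_) (Or.inr ?_)
  · simp only [mem_support_append_iff] at hv
    rcases hv with h | h | h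
    · exact Or.inr (c.ab_inter_bc v ha h)
    · exact (c.ab_disjoint_cd ha h).elim
    · exact Or.inl (c.da_inter_ab v h ha)
  · have hb := not_nil_iff_lt_length.mp (c.bc.not_nil_of_ne
      (end_ne_end_of_disjoint_support c.lb_disjoint_lc))
    have hc := not_nil_iff_lt_length.mp (c.cd.not_nil_of_ne
      (end_ne_end_of_disjoint_support c.lc_disjoint_ld))
    simp only [length_append]
    omega

def rotate : G.QIVSubdivision vb vc vd va where
  za := c.zb
  zb := c.zc
  zc := c.zd
  zd := c.za
  ab := c.bc
  bc := c.cd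
  cd := c.da
  da := c.ab
  la := c.lb
  lb := c.lc
  lc := c.ld
  ld := c.la
  ab_isPath := c.bc_isPath
  bc_isPath := c.cd_isPath
  cd_isPath := c.da_isPath
  da_isPath := c.ab_isPath
  ab_inter_bc := c.bc_inter_cd
  bc_inter_cd := c.cd_inter_da
  cd_inter_da := c.da_inter_ab
  da_inter_ab := c.ab_inter_bc
  ab_disjoint_cd := c.bc_disjoint_da
  bc_disjoint_da := c.ab_disjoint_cd.symm
  la_isLeg := c.lb_isLeg.congr fun _ => by
    simp only [Set.mem_ofPred_eq, mem_support_append_iff]; tauto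
  lb_isLeg := c.lc_isLeg.congr fun _ => by
    simp only [Set.mem_ofPred_eq, mem_support_append_iff]; tauto
  lc_isLeg := c.ld_isLeg.congr fun _ => by
    simp only [Set.mem_ofPred_eq, mem_support_append_iff]; tauto
  ld_isLeg := c.la_isLeg.congr fun _ => by
    simp only [Set.mem_ofPred_eq, mem_support_append_iff]; tauto
  la_disjoint_lb := c.lb_disjoint_lc
  la_disjoint_lc := c.lb_disjoint_ld
  la_disjoint_ld := c.la_disjoint_lb.symm
  lb_disjoint_lc := c.lc_disjoint_ld
  lb_disjoint_ld := c.la_disjoint_lc.symm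
  lc_disjoint_ld := c.la_disjoint_ld.symm

/-- Drop the corner `zc` and split the arc `da` at the attachment `z` of a new leg `L`. -/
def splitDA [DecidableEq V] {ve z : V} (L : G.Walk ve z)
    (hL : L.IsLeg {v | v ∈ c.cycle.support}) (hz : z ∈ c.da.support) (hzd : z ≠ c.zd)
    (hza : z ≠ c.za) (ha : c.la.support.Disjoint L.support)
    (hb : c.lb.support.Disjoint L.support) (hd : c.ld.support.Disjoint L.support) :
    G.QIVSubdivision va vb vd ve where
  za := c.za
  zb := c.zb
  zc := c.zd
  zd := z
  ab := c.ab
  bc := c.bc.append c.cd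
  cd := c.da.takeUntil z hz
  da := c.da.dropUntil z hz
  la := c.la
  lb := c.lb
  lc := c.ld
  ld := L
  ab_isPath := c.ab_isPath
  bc_isPath := c.bc_isPath.append c.cd_isPath c.bc_inter_cd
  cd_isPath := c.da_isPath.takeUntil hz
  da_isPath := c.da_isPath.dropUntil hz
  ab_inter_bc v hab hv := by
    rcases (mem_support_append_iff _ _).mp hv with h | h
    · exact c.ab_inter_bc v hab h
    · exact (c.ab_disjoint_cd hab h).elim
  bc_inter_cd v hv ht := by
    have hda := support_takeUntil_subset_support _ hz ht
    rcases (mem_support_append_iff _ _).mp hv with h | h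
    · exact (c.bc_disjoint_da h hda).elim
    · exact c.cd_inter_da v h hda
  cd_inter_da _ ht hd := c.da_isPath.eq_of_mem_takeUntil_of_mem_dropUntil hz ht hd
  da_inter_ab v hd hab := c.da_inter_ab v (support_dropUntil_subset_support _ hz hd) hab
  ab_disjoint_cd v hab ht := by
    rw [c.da_inter_ab v (support_takeUntil_subset_support _ hz ht) hab] at ht
    exact hza (c.da_isPath.eq_of_mem_takeUntil_of_mem_dropUntil hz ht (end_mem_support _)).symm
  bc_disjoint_da v hv hd := by
    have hda := support_dropUntil_subset_support _ hz hd
    rcases (mem_support_append_iff _ _).mp hv with h | h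
    · exact c.bc_disjoint_da h hda
    · rw [c.cd_inter_da v h hda] at hd
      exact hzd (c.da_isPath.eq_of_mem_takeUntil_of_mem_dropUntil hz (start_mem_support _)
        hd).symm
  la_isLeg := c.la_isLeg.congr fun v => by
    simp only [Set.mem_ofPred_eq, mem_support_append_iff,
      c.da.mem_support_iff_mem_takeUntil_or_mem_dropUntil hz]; tauto
  lb_isLeg := c.lb_isLeg.congr fun v => by
    simp only [Set.mem_ofPred_eq, mem_support_append_iff,
      c.da.mem_support_iff_mem_takeUntil_or_mem_dropUntil hz]; tauto
  lc_isLeg := c.ld_isLeg.congr fun v => by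
    simp only [Set.mem_ofPred_eq, mem_support_append_iff,
      c.da.mem_support_iff_mem_takeUntil_or_mem_dropUntil hz]; tauto
  ld_isLeg := hL.congr fun v => by
    simp only [Set.mem_ofPred_eq, cycle, mem_support_append_iff,
      c.da.mem_support_iff_mem_takeUntil_or_mem_dropUntil hz]; tauto
  la_disjoint_lb := c.la_disjoint_lb
  la_disjoint_lc := c.la_disjoint_ld
  la_disjoint_ld := ha
  lb_disjoint_lc := c.lb_disjoint_ld
  lb_disjoint_ld := hb
  lc_disjoint_ld := hd

theorem disjointPaths (c : G.QIVSubdivision va vb vc vd) : G.DisjointPaths va vb vc vd := by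
  classical
  refine ⟨(c.la.append (c.ab.append c.lb.reverse)).bypass,
    (c.lc.append (c.cd.append c.ld.reverse)).bypass, bypass_isPath _, bypass_isPath _,
    fun v h₁ h₂ => ?_⟩
  replace h₁ := support_bypass_subset_support _ h₁
  replace h₂ := support_bypass_subset_support _ h₂
  simp only [mem_support_append_iff, support_reverse, List.mem_reverse] at h₁ h₂
  rcases h₁ with h₁ | h₁ | h₁ <;> rcases h₂ with h₂ | h₂ | h₂
  · exact c.la_disjoint_lc h₁ h₂
  · rw [c.la_isLeg.eq_end v h₁ (c.mem_support_cycle.mpr (by simp [h₂]))] at h₂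
    exact c.ab_disjoint_cd c.ab.start_mem_support h₂
  · exact c.la_disjoint_ld h₁ h₂
  · rw [c.lc_isLeg.eq_end v h₂ (c.mem_support_cycle.mpr (by simp [h₁]))] at h₁
    exact c.ab_disjoint_cd h₁ c.cd.start_mem_support
  · exact c.ab_disjoint_cd h₁ h₂
  · rw [c.ld_isLeg.eq_end v h₂ (c.mem_support_cycle.mpr (by simp [h₁]))] at h₁
    exact c.ab_disjoint_cd h₁ c.cd.end_mem_support
  · exact c.lb_disjoint_lc h₁ h₂
  · rw [c.lb_isLeg.eq_end v h₁ (c.mem_support_cycle.mpr (by simp [h₂]))] at h₂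
    exact c.ab_disjoint_cd c.ab.end_mem_support h₂
  · exact c.lb_disjoint_ld h₁ h₂

theorem zd_notMem_support_ab_append_bc : c.zd ∉ (c.ab.append c.bc).support := by
  rw [mem_support_append_iff]
  rintro (h | h)
  · exact c.ab_disjoint_cd h c.cd.end_mem_support
  · exact c.bc_disjoint_da h c.da.start_mem_support

theorem zd_mem_or_support_subset (lvl : Level1Prop G) (p : G.Walk va vc) :
    c.zd ∈ p.support ∨ (c.ab.append c.bc).support ⊆ p.support := by
  refine Level1Prop.mem_or_support_subset lvl c.isCycle c.la_isLeg c.lc_isLeg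
    (end_ne_end_of_disjoint_support c.la_disjoint_lc)
    (c.ab_isPath.append c.bc_isPath c.ab_inter_bc)
    (fun w hw => c.mem_support_cycle.mpr ?_) (c.mem_support_cycle.mpr (by simp))
    c.zd_notMem_support_ab_append_bc p
  rw [mem_support_append_iff] at hw
  tauto

theorem not_disjointPaths (c : G.QIVSubdivision va vb vc vd) (lvl : Level1Prop G) :
    ¬ G.DisjointPaths va vc vb vd := by
  rintro ⟨p, q, -, -, hpq⟩
  have hq := Level1Prop.mem_support_of_isLeg_of_isLeg lvl c.isCycle c.lb_isLeg c.ld_isLeg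
    (end_ne_end_of_disjoint_support c.lb_disjoint_ld) q
  rcases c.zd_mem_or_support_subset lvl p with h | h
  · exact hpq h hq.2
  · exact hpq (h (by simp)) hq.1

theorem mem_support_da_of_disjointPaths (lvl : Level1Prop G) {ve z : V} {L : G.Walk ve z}
    (hL : L.IsLeg {v | v ∈ c.cycle.support}) (h₁ : G.DisjointPaths ve va vc vd)
    (h₂ : G.DisjointPaths ve vd va vc) :
    z ∈ c.da.support ∧ z ∉ c.ab.support ∧ z ∉ c.cd.support := by
  have hcd : z ∉ c.cd.support := fun hz => by
    obtain ⟨p, q, -, -, hpq⟩ := h₁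
    have hp := Level1Prop.mem_support_of_isLeg_of_isLeg lvl c.isCycle hL c.la_isLeg
      (fun h => c.ab_disjoint_cd c.ab.start_mem_support (h ▸ hz)) p
    rcases Level1Prop.mem_or_support_subset lvl c.isCycle c.lc_isLeg c.ld_isLeg
      (end_ne_end_of_disjoint_support c.lc_disjoint_ld) c.cd_isPath
      (fun w hw => c.mem_support_cycle.mpr (by simp [hw])) (c.mem_support_cycle.mpr (by simp))
      (c.ab_disjoint_cd c.ab.start_mem_support) q with h | h
    · exact hpq hp.2 h
    · exact hpq hp.1 (h hz)
  have habc : z ∉ (c.ab.append c.bc).support := fun hz => by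
    obtain ⟨p, q, -, -, hpq⟩ := h₂
    have hp := Level1Prop.mem_support_of_isLeg_of_isLeg lvl c.isCycle hL c.ld_isLeg
      (fun h => c.zd_notMem_support_ab_append_bc (h ▸ hz)) p
    rcases c.zd_mem_or_support_subset lvl q with h | h
    · exact hpq hp.2 h
    · exact hpq hp.1 (h hz)
  have hz := c.mem_support_cycle.mp hL.end_mem
  rw [mem_support_append_iff] at habc
  exact ⟨by tauto, fun h => habc (Or.inl h), hcd⟩

theorem nonempty_of_isLeg (lvl : Level1Prop G) {ve z : V} {L : G.Walk ve z}
    (hL : L.IsLeg {v | v ∈ c.cycle.support}) (h₁ : G.DisjointPaths ve va vc vd)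
    (h₂ : G.DisjointPaths ve vd va vc) : Nonempty (G.QIVSubdivision va vb vd ve) := by
  classical
  obtain ⟨hz, hab, hcd⟩ := c.mem_support_da_of_disjointPaths lvl hL h₁ h₂
  have hdisj {x z' : V} {L' : G.Walk x z'} (hL' : L'.IsLeg {v | v ∈ c.cycle.support})
      (hne : z' ≠ z) : L'.support.Disjoint L.support :=
    Level1Prop.disjoint_support_of_isLeg lvl c.isCycle hL' hL hne
  exact ⟨c.splitDA L hL hz (fun h => hcd (h ▸ c.cd.end_mem_support))
    (fun h => hab (h ▸ c.ab.start_mem_support))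
    (hdisj c.la_isLeg fun h => hab (h ▸ c.ab.start_mem_support))
    (hdisj c.lb_isLeg fun h => hab (h ▸ c.ab.end_mem_support))
    (hdisj c.ld_isLeg fun h => hcd (h ▸ c.cd.end_mem_support))⟩

end QIVSubdivision

section Construction

variable {va vb vc vd : V} {P : G.Walk va vb} {Q : G.Walk vc vd} {M : G.Walk u w}
  {M' : G.Walk u' w'}

theorem DisjointPaths.of_bridges (hPQ : P.support.Disjoint Q.support)
    (hM : M.IsLeg {v | v ∈ Q.support}) (hMr : M.reverse.IsLeg {v | v ∈ P.support})
    (hM' : M'.IsLeg {v | v ∈ Q.support}) (hM'r : M'.reverse.IsLeg {v | v ∈ P.support})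
    (hMM' : M.support.Disjoint M'.support) (s : P.PathSplit u u') (t : Q.PathSplit w w') :
    G.DisjointPaths va vc vb vd := by
  classical
  have eM : ∀ v ∈ M.support, v ∈ P.support → v = u := fun v hv => hMr.eq_end v (by simpa)
  have eM' : ∀ v ∈ M'.support, v ∈ P.support → v = u' := fun v hv => hM'r.eq_end v (by simpa)
  refine ⟨(s.head.append (M.append t.head.reverse)).bypass,
    (s.tail.reverse.append (M'.append t.tail)).bypass, bypass_isPath _, bypass_isPath _,
    fun v h₁ h₂ => ?_⟩
  replace h₁ := support_bypass_subset_support _ h₁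
  replace h₂ := support_bypass_subset_support _ h₂
  simp only [mem_support_append_iff, support_reverse, List.mem_reverse] at h₁ h₂
  rcases h₁ with h₁ | h₁ | h₁ <;> rcases h₂ with h₂ | h₂ | h₂
  · exact s.head_disjoint_tail h₁ h₂
  · rw [eM' v h₂ (s.head_subset h₁)] at h₁
    exact s.head_disjoint_tail h₁ s.tail.start_mem_support
  · exact hPQ (s.head_subset h₁) (t.tail_subset h₂)
  · rw [eM v h₁ (s.tail_subset h₂)] at h₂
    exact s.head_disjoint_tail s.head.end_mem_support h₂
  · exact hMM' h₁ h₂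
  · rw [hM.eq_end v h₁ (t.tail_subset h₂)] at h₂
    exact t.head_disjoint_tail t.head.end_mem_support h₂
  · exact hPQ (s.tail_subset h₂) (t.head_subset h₁)
  · rw [hM'.eq_end v h₂ (t.head_subset h₁)] at h₁
    exact t.head_disjoint_tail h₁ t.tail.start_mem_support
  · exact t.head_disjoint_tail h₁ h₂

theorem QIVSubdivision.nonempty_of_crossing_bridges (hPQ : P.support.Disjoint Q.support)
    (hM : M.IsLeg {v | v ∈ Q.support}) (hMr : M.reverse.IsLeg {v | v ∈ P.support})
    (hM' : M'.IsLeg {v | v ∈ Q.support}) (hM'r : M'.reverse.IsLeg {v | v ∈ P.support})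
    (hMM' : M.support.Disjoint M'.support) (s : P.PathSplit u u') (t : Q.PathSplit w' w) :
    Nonempty (G.QIVSubdivision va vb vc vd) := by
  have eM : ∀ v ∈ M.support, v ∈ P.support → v = u := fun v hv => hMr.eq_end v (by simpa)
  have eM' : ∀ v ∈ M'.support, v ∈ P.support → v = u' := fun v hv => hM'r.eq_end v (by simpa)
  have hMrQ : ∀ v ∈ M.reverse.support, v ∈ Q.support → v = w :=
    fun v hv => hM.eq_end v (by simpa using hv)
  set S := {v | v ∈ (s.mid.append (M'.append (t.mid.append M.reverse))).support}
  have hSP : ∀ v ∈ S, v ∈ P.support → v ∈ s.mid.support := by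
    intro v hv hvP
    simp only [S, Set.mem_ofPred_eq, mem_support_append_iff] at hv
    rcases hv with h | h | h | h
    · exact h
    · exact eM' v h hvP ▸ s.mid.end_mem_support
    · exact (hPQ hvP (t.mid_subset h)).elim
    · exact hMr.eq_end v h hvP ▸ s.mid.start_mem_support
  have hSQ : ∀ v ∈ S, v ∈ Q.support → v ∈ t.mid.support := by
    intro v hv hvQ
    simp only [S, Set.mem_ofPred_eq, mem_support_append_iff] at hv
    rcases hv with h | h | h | h
    · exact (hPQ (s.mid_subset h) hvQ).elim
    · exact hM'.eq_end v h hvQ ▸ t.mid.start_mem_support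
    · exact h
    · exact hMrQ v h hvQ ▸ t.mid.end_mem_support
  exact ⟨{
    za := u, zb := u', zc := w', zd := w
    ab := s.mid, bc := M', cd := t.mid, da := M.reverse
    la := s.head, lb := s.tail.reverse, lc := t.head, ld := t.tail.reverse
    ab_isPath := s.mid_isPath, bc_isPath := hM'.isPath, cd_isPath := t.mid_isPath
    da_isPath := hMr.isPath
    ab_inter_bc := fun v h₁ h₂ => eM' v h₂ (s.mid_subset h₁)
    bc_inter_cd := fun v h₁ h₂ => hM'.eq_end v h₁ (t.mid_subset h₂)
    cd_inter_da := fun v h₁ h₂ => hMrQ v h₂ (t.mid_subset h₁)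
    da_inter_ab := fun v h₁ h₂ => hMr.eq_end v h₁ (s.mid_subset h₂)
    ab_disjoint_cd := fun v h₁ h₂ => hPQ (s.mid_subset h₁) (t.mid_subset h₂)
    bc_disjoint_da := fun v h₁ h₂ => hMM' (by simpa using h₂) h₁
    la_isLeg := ⟨s.head_isPath, by simp,
      fun v hv hS => s.head_inter_mid v hv (hSP v hS (s.head_subset hv))⟩
    lb_isLeg := ⟨s.tail_isPath.reverse, by simp, fun v hv hS => by
      rw [support_reverse, List.mem_reverse] at hv
      exact (s.mid_inter_tail v (hSP v hS (s.tail_subset hv)) hv)⟩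
    lc_isLeg := ⟨t.head_isPath, by simp,
      fun v hv hS => t.head_inter_mid v hv (hSQ v hS (t.head_subset hv))⟩
    ld_isLeg := ⟨t.tail_isPath.reverse, by simp, fun v hv hS => by
      rw [support_reverse, List.mem_reverse] at hv
      exact (t.mid_inter_tail v (hSQ v hS (t.tail_subset hv)) hv)⟩
    la_disjoint_lb := fun v h₁ h₂ => s.head_disjoint_tail h₁ (by simpa using h₂)
    la_disjoint_lc := fun v h₁ h₂ => hPQ (s.head_subset h₁) (t.head_subset h₂)
    la_disjoint_ld := fun v h₁ h₂ => hPQ (s.head_subset h₁) (t.tail_subset (by simpa using h₂))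
    lb_disjoint_lc := fun v h₁ h₂ => hPQ (s.tail_subset (by simpa using h₁)) (t.head_subset h₂)
    lb_disjoint_ld := fun v h₁ h₂ =>
      hPQ (s.tail_subset (by simpa using h₁)) (t.tail_subset (by simpa using h₂))
    lc_disjoint_ld := fun v h₁ h₂ => t.head_disjoint_tail h₁ (by simpa using h₂) }⟩

theorem QIVSubdivision.nonempty_of_bridges [DecidableEq V] (hQ : Q.IsPath)
    (hPQ : P.support.Disjoint Q.support)
    (hM : M.IsLeg {v | v ∈ Q.support}) (hMr : M.reverse.IsLeg {v | v ∈ P.support})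
    (hM' : M'.IsLeg {v | v ∈ Q.support}) (hM'r : M'.reverse.IsLeg {v | v ∈ P.support})
    (hMM' : M.support.Disjoint M'.support) (s : P.PathSplit u u')
    (hcross : ¬ G.DisjointPaths va vc vb vd) : Nonempty (G.QIVSubdivision va vb vc vd) := by
  have hww' : w ≠ w' := fun h => hMM' M.end_mem_support (h ▸ M'.end_mem_support)
  rcases Q.mem_support_takeUntil_or hM.end_mem hM'.end_mem with h | h
  · exact (hcross (.of_bridges hPQ hM hMr hM' hM'r hMM' s (hQ.pathSplit _ h hww'))).elim
  · exact nonempty_of_crossing_bridges hPQ hM hMr hM' hM'r hMM' s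
      (hQ.pathSplit _ h hww'.symm)

theorem QIVSubdivision.nonempty_of_disjointPaths [DecidableEq V]
    (h₁ : G.DisjointPaths va vb vc vd) (h₂ : G.DisjointPaths va vd vb vc)
    (h₃ : ¬ G.DisjointPaths va vc vb vd) :
    Nonempty (G.QIVSubdivision va vb vc vd) := by
  obtain ⟨P, Q, hP, hQ, hPQ⟩ := h₁
  obtain ⟨P', Q', -, -, hPQ'⟩ := h₂
  obtain ⟨u, w, M, hM, hMr, hMP'⟩ := P'.exists_isLeg_reverse_isLeg
    (S := {v | v ∈ P.support}) (T := {v | v ∈ Q.support}) P.start_mem_support Q.end_mem_support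
  obtain ⟨u', w', M', hM', hM'r, hM'Q'⟩ := Q'.exists_isLeg_reverse_isLeg
    (S := {v | v ∈ P.support}) (T := {v | v ∈ Q.support}) P.end_mem_support Q.start_mem_support
  have hMM' : M.support.Disjoint M'.support := fun v h h' => hPQ' (hMP' h) (hM'Q' h')
  have huu' : u ≠ u' := fun h => hMM' M.start_mem_support (h ▸ M'.start_mem_support)
  rcases P.mem_support_takeUntil_or hMr.end_mem hM'r.end_mem with h | h
  · exact nonempty_of_bridges hQ hPQ hM hMr hM' hM'r hMM' (hP.pathSplit _ h huu') h₃
  · exact nonempty_of_bridges hQ hPQ hM' hM'r hM hMr hMM'.symm (hP.pathSplit _ h huu'.symm) h₃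

end Construction

end SimpleGraph

theorem Sym2.sides_eq_of_diagonals_eq {α : Type*} {a b c d a' b' c' d' : α}
    (h : s(s(a, c), s(b, d)) = s(s(a', c'), s(b', d'))) :
    (s(s(a, b), s(c, d)) = s(s(a', b'), s(c', d')) ∧
      s(s(a, d), s(b, c)) = s(s(a', d'), s(b', c'))) ∨
    (s(s(a, b), s(c, d)) = s(s(a', d'), s(b', c')) ∧
      s(s(a, d), s(b, c)) = s(s(a', b'), s(c', d'))) := by
  simp only [Sym2.eq_iff] at h ⊢
  rcases h with ⟨⟨rfl, rfl⟩ | ⟨rfl, rfl⟩, ⟨rfl, rfl⟩ | ⟨rfl, rfl⟩⟩ |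
    ⟨⟨rfl, rfl⟩ | ⟨rfl, rfl⟩, ⟨rfl, rfl⟩ | ⟨rfl, rfl⟩⟩ <;> simp

namespace BLvl1

open SimpleGraph

variable {ι : Type*} {N : BLvl1 ι} {a b c d a' b' c' d' : ι}

theorem dpaths_congr (h : N.dpaths a b c d)
    (e : s(s(a, b), s(c, d)) = s(s(a', b'), s(c', d'))) : N.dpaths a' b' c' d' :=
  DisjointPaths.congr h (by simpa using congrArg (Sym2.map (Sym2.map N.leaf)) e)

theorem dpaths_of_displays_qIV (h : N.displays (qIV a b c d)) :
    N.dpaths a b c d ∧ N.dpaths a d b c ∧ ¬ N.dpaths a c b d := by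
  rcases h with ⟨_, _, _, _, _, _, -, h, -⟩ | ⟨a', b', c', d', -, h, -, -, -, h₁, h₂, h₃⟩
  · simp [qIV, qT] at h
  · simp only [qIV, Qnet.cycleType.injEq] at h
    have h₃' : ¬ N.dpaths a c b d := fun h' => h₃ (dpaths_congr h' h)
    rcases Sym2.sides_eq_of_diagonals_eq h with ⟨e₁, e₂⟩ | ⟨e₁, e₂⟩
    · exact ⟨dpaths_congr h₁ e₁.symm, dpaths_congr h₂ e₂.symm, h₃'⟩
    · exact ⟨dpaths_congr h₂ e₁.symm, dpaths_congr h₁ e₂.symm, h₃'⟩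

theorem displays_qIV_of_qIVSubdivision (hnd : [a, b, c, d].Nodup)
    (T : N.G.QIVSubdivision (N.leaf a) (N.leaf b) (N.leaf c) (N.leaf d)) :
    N.displays (qIV a b c d) := by
  have hC := T.isCycle
  refine Or.inr ⟨a, b, c, d, hnd, rfl, ?_, ?_, ?_, T.disjointPaths,
    T.rotate.disjointPaths.symm.congr_left Sym2.eq_swap, T.not_disjointPaths N.level1⟩
  · rintro ⟨_, _, -, -, h₁, h₂, h₃⟩
    exact h₃ (hC.reachable_deleteEdges_of_reachable _ T.la_isLeg.end_mem T.lb_isLeg.end_mem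
      T.lc_isLeg.end_mem T.ld_isLeg.end_mem T.la_disjoint_lb T.la_disjoint_lc T.lc_disjoint_ld
      h₁ h₂)
  · rintro ⟨_, _, -, -, h₁, h₂, h₃⟩
    exact h₃ (hC.reachable_deleteEdges_of_reachable _ T.la_isLeg.end_mem T.lc_isLeg.end_mem
      T.lb_isLeg.end_mem T.ld_isLeg.end_mem T.la_disjoint_lc T.la_disjoint_lb T.lb_disjoint_ld
      h₁ h₂)
  · rintro ⟨_, _, -, -, h₁, h₂, h₃⟩
    exact h₃ (hC.reachable_deleteEdges_of_reachable _ T.la_isLeg.end_mem T.ld_isLeg.end_mem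
      T.lb_isLeg.end_mem T.lc_isLeg.end_mem T.la_disjoint_ld T.la_disjoint_lb T.lb_disjoint_lc
      h₁ h₂)

end BLvl1

open SimpleGraph

/-- Soundness of (CL3): if a binary level-1 network N displays the Type IV
    qnets with circular orders (a,b,c,d) and (e,a,c,d), then N displays the
    Type IV qnet with circular order (a,b,d,e). -/
theorem cl3_sound (N : BLvl1 X) (a b c d e : X)
    (h : ([a, b, c, d, e] : List X).Nodup)
    (h1 : N.displays (qIV a b c d)) (h2 : N.displays (qIV e a c d)) :
    N.displays (qIV a b d e) := by
  classical
  obtain ⟨hab, had, hac⟩ := BLvl1.dpaths_of_displays_qIV h1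
  obtain ⟨hea, hed, -⟩ := BLvl1.dpaths_of_displays_qIV h2
  obtain ⟨T⟩ := QIVSubdivision.nonempty_of_disjointPaths hab had hac
  obtain ⟨_, L, hL, -⟩ := (N.conn.preconnected (N.leaf e) T.za).some.exists_isLeg
    (S := {v | v ∈ T.cycle.support}) T.cycle.start_mem_support
  obtain ⟨T'⟩ := T.nonempty_of_isLeg N.level1 hL hea hed
  exact BLvl1.displays_qIV_of_qIVSubdivision (h.sublist (by simp)) T'
end

section
/- If N' is obtained from a level-1 network N on X by a blow-up operation on an interior vertex u of degree k ≥ 3 not contained in any cycle of N, then N' is a level-1 network on X whose number of cycles exceeds that of N by exactly one. -/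
/- Blowing up a cycle-free interior vertex of a level-1 network yields a
   level-1 network with exactly one more cycle. -/

variable {X : Type*} [Fintype X] [DecidableEq X]

/-- A (not necessarily binary) level-1 phylogenetic network on X. -/
structure Lvl1Net (X : Type*) where
  V : Type*
  [fV : Fintype V]
  [dV : DecidableEq V]
  G : SimpleGraph V
  conn : G.Connected
  leaf : X ↪ V
  deg_leaf : ∀ x : X, (G.neighborSet (leaf x)).ncard = 1
  leaf_of_deg : ∀ v : V, (G.neighborSet v).ncard = 1 → ∃ x, leaf x = v
  deg_ge : ∀ v : V, (G.neighborSet v).ncard = 1 ∨ 3 ≤ (G.neighborSet v).ncard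
  level1 : Level1Prop G

attribute [instance] Lvl1Net.fV Lvl1Net.dV

/-- The blow-up of N at the vertex u whose neighbours are enumerated in the
    circular order vs : Fin k → V: the vertex u is replaced by a k-cycle
    u_0, …, u_{k-1}, with u_i joined to vs i. -/
def blowUp (N : Lvl1Net X) (u : N.V) (k : ℕ) (vs : Fin k → N.V) :
    SimpleGraph ({w : N.V // w ≠ u} ⊕ Fin k) :=
  SimpleGraph.fromRel (fun p q =>
    (∃ x y : {w : N.V // w ≠ u}, p = Sum.inl x ∧ q = Sum.inl y ∧
      N.G.Adj x.1 y.1) ∨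
    (∃ (x : {w : N.V // w ≠ u}) (i : Fin k), p = Sum.inl x ∧ q = Sum.inr i ∧
      x.1 = vs i) ∨
    (∃ i : Fin k, p = Sum.inr i ∧
      q = Sum.inr ⟨(i.1 + 1) % k, Nat.mod_lt _ (Nat.lt_of_le_of_lt (Nat.zero_le _) i.isLt)⟩))

/-! Every spoke `{u_i, v_i}` of the blow-up is a bridge: contracting the new cycle back to `u`
turns a detour around the spoke into a detour around the edge `{v_i, u}` of `N`, which is a
bridge because `u` lies on no cycle. Hence every cycle of the blow-up avoids the spokes, so it
lies either in `N - u` or in the new `k`-cycle, and the level-1 property is inherited from `N`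
and from the cycle graph. Old vertices keep their degree and new ones get degree 3, so the
handshake lemma gives `|E'| = |E| + k`, while `|V'| = |V| + k - 1`. -/

namespace SimpleGraph

variable {V W : Type*} {G : SimpleGraph V} {H : SimpleGraph W}

theorem Reachable.map_of_forall_adj {f : V → W}
    (hf : ∀ a b, G.Adj a b → H.Reachable (f a) (f b)) {a b : V} (h : G.Reachable a b) :
    H.Reachable (f a) (f b) := by
  rw [reachable_iff_reflTransGen] at h ⊢
  exact Relation.ReflTransGen.lift' f
    (fun a b hab => (reachable_iff_reflTransGen _ _).1 (hf a b hab)) _ _ h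

theorem ncard_neighborSet_eq_degree (v : V) [Fintype (G.neighborSet v)] :
    (G.neighborSet v).ncard = G.degree v := by
  rw [← coe_neighborFinset, Set.ncard_coe_finset, card_neighborFinset_eq_degree]

theorem sum_ncard_neighborSet_eq_twice_ncard_edgeSet [Fintype V] :
    ∑ v, (G.neighborSet v).ncard = 2 * G.edgeSet.ncard := by
  classical
  simp_rw [ncard_neighborSet_eq_degree]
  rw [sum_degrees_eq_twice_card_edges, ← Set.ncard_coe_finset, coe_edgeFinset]

theorem cycleGraph_degree_eq_two {k : ℕ} (hk : 3 ≤ k) (i : Fin k) :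
    (cycleGraph k).degree i = 2 := by
  obtain ⟨n, rfl⟩ := Nat.exists_eq_add_of_le' hk
  exact cycleGraph_degree_three_le

namespace Walk

variable {u : V}

theorem IsCycle.mem_support_of_adj [G.LocallyFinite] {c : G.Walk u u} (hc : c.IsCycle)
    {v w : V} (hv : v ∈ c.support) (hdeg : G.degree v ≤ 2) (hvw : G.Adj v w) :
    w ∈ c.support := by
  have hsub := c.toSubgraph.neighborSet_subset v
  have heq : c.toSubgraph.neighborSet v = G.neighborSet v :=
    Set.eq_of_subset_of_ncard_le hsub
      (by rw [hc.ncard_neighborSet_toSubgraph_eq_two hv, ncard_neighborSet_eq_degree]; exact hdeg)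
      (Set.toFinite _)
  have hw : c.toSubgraph.Adj v w := by
    rw [← Subgraph.mem_neighborSet, heq]; exact hvw
  exact (c.mem_verts_toSubgraph).1 hw.snd_mem

theorem IsCycle.mem_support_of_preconnected [G.LocallyFinite] (hG : G.Preconnected)
    (hdeg : ∀ v, G.degree v ≤ 2) {c : G.Walk u u} (hc : c.IsCycle) (w : V) :
    w ∈ c.support := by
  suffices ∀ {x} (p : G.Walk x w), x ∈ c.support → w ∈ c.support from
    this (hG u w).some c.start_mem_support
  intro x p hx
  induction p with
  | nil => exact hx
  | cons h p ih => exact ih (hc.mem_support_of_adj hx (hdeg _) h)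

theorem IsCycle.exists_isCycle_support_map_eq (f : G ↪g H) {w : W} {c : H.Walk w w}
    (hc : c.IsCycle) (hs : ∀ x ∈ c.support, x ∈ Set.range f) :
    ∃ (v : V) (d : G.Walk v v), d.IsCycle ∧ d.support.map f = c.support := by
  have hind : (c.induce _ hs).IsCycle := by
    rw [← isCycle_map_iff_of_injective (f := (Embedding.induce (G := H) (Set.range f)).toHom)
      (Embedding.induce (G := H) _).injective, map_induce]
    exact hc
  let e := f.isoInduceRange.symm
  refine ⟨_, (c.induce _ hs).map e.toHom, (isCycle_map_iff_of_injective e.injective).2 hind, ?_⟩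
  have hfe : ∀ x, f (e x) = x.1 := fun x => by
    simp [e, Embedding.isoInduceRange, Equiv.apply_ofInjective_symm]
  simp [support_map, hfe]

end Walk

end SimpleGraph

section Level1

open SimpleGraph

variable {V W : Type*} {G : SimpleGraph V} {H : SimpleGraph W}

theorem Level1Prop.of_embedding (f : G ↪g H) (hH : Level1Prop H) : Level1Prop G := by
  intro a c hc b c' hc' ⟨v, hv, hv'⟩ x
  have hmem : ∀ {y : V} (d : G.Walk y y) (z : V),
      z ∈ d.support ↔ f z ∈ (d.map f.toHom).support := fun d z => by simp [Walk.support_map]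
  rw [hmem c, hmem c']
  exact hH _ (hc.map f.injective) _ (hc'.map f.injective)
    ⟨f v, (hmem c v).1 hv, (hmem c' v).1 hv'⟩ (f x)

theorem Level1Prop.mem_support_iff_of_forall_mem_range (f : G ↪g H) (hG : Level1Prop G)
    {a b : W} {c : H.Walk a a} {c' : H.Walk b b} (hc : c.IsCycle) (hc' : c'.IsCycle)
    (hs : ∀ x ∈ c.support, x ∈ Set.range f) (hs' : ∀ x ∈ c'.support, x ∈ Set.range f)
    (hshare : ∃ v, v ∈ c.support ∧ v ∈ c'.support) (v : W) :
    v ∈ c.support ↔ v ∈ c'.support := by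
  obtain ⟨_, d, hd, hds⟩ := hc.exists_isCycle_support_map_eq f hs
  obtain ⟨_, d', hd', hds'⟩ := hc'.exists_isCycle_support_map_eq f hs'
  obtain ⟨_, hv, hv'⟩ := hshare
  obtain ⟨y, rfl⟩ := hs _ hv
  by_cases hx : v ∈ Set.range f
  · obtain ⟨x, rfl⟩ := hx
    rw [← hds, List.mem_map_of_injective f.injective] at hv ⊢
    rw [← hds', List.mem_map_of_injective f.injective] at hv' ⊢
    exact hG d hd d' hd' ⟨y, hv, hv'⟩ x
  · exact iff_of_false (fun h => hx (hs v h)) (fun h => hx (hs' v h))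

theorem Level1Prop.sum (hG : Level1Prop G) (hH : Level1Prop H) : Level1Prop (G ⊕g H) := by
  classical
  intro a c hc b c' hc' hshare
  obtain ⟨v₀, h₀, h₀'⟩ := hshare
  have hreach : ∀ {a} (d : (G ⊕g H).Walk a a) {x y}, x ∈ d.support → y ∈ d.support →
      (G ⊕g H).Reachable x y :=
    fun d _ _ hx hy => (Reachable.symm ⟨d.takeUntil _ hx⟩).trans ⟨d.takeUntil _ hy⟩
  rcases v₀ with a₀ | b₀
  · have hs : ∀ {a} (d : (G ⊕g H).Walk a a), Sum.inl a₀ ∈ d.support →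
        ∀ x ∈ d.support, x ∈ Set.range (Sum.inl : V → V ⊕ W) := by
      rintro _ d h₀ (x | x) hx
      · exact ⟨x, rfl⟩
      · exact (not_reachable_sum_inl_inr a₀ x (hreach d h₀ hx)).elim
    exact hG.mem_support_iff_of_forall_mem_range Embedding.sumInl hc hc' (hs c h₀) (hs c' h₀')
      ⟨_, h₀, h₀'⟩
  · have hs : ∀ {a} (d : (G ⊕g H).Walk a a), Sum.inr b₀ ∈ d.support →
        ∀ x ∈ d.support, x ∈ Set.range (Sum.inr : W → V ⊕ W) := by
      rintro _ d h₀ (x | x) hx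
      · exact (not_reachable_sum_inl_inr x b₀ (hreach d hx h₀)).elim
      · exact ⟨x, rfl⟩
    exact hH.mem_support_iff_of_forall_mem_range Embedding.sumInr hc hc' (hs c h₀) (hs c' h₀')
      ⟨_, h₀, h₀'⟩

theorem Level1Prop.of_forall_isBridge {R : SimpleGraph V} (hR : Level1Prop R)
    (hbr : ∀ e ∈ G.edgeSet, e ∉ R.edgeSet → G.IsBridge e) : Level1Prop G := by
  have hedges : ∀ {a} (c : G.Walk a a), c.IsCycle → ∀ e ∈ c.edges, e ∈ R.edgeSet :=
    fun c hc e he => by_contra fun h =>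
      (hbr e (c.edges_subset_edgeSet he) h).notMem_edges_of_isCycle hc he
  intro a c hc b c' hc' hshare v
  simpa only [Walk.support_transfer] using hR (c.transfer R (hedges c hc)) (hc.transfer _)
    (c'.transfer R (hedges c' hc')) (hc'.transfer _)
    (by simpa only [Walk.support_transfer] using hshare) v

theorem Level1Prop.of_preconnected_of_degree_le_two [G.LocallyFinite] (hG : G.Preconnected)
    (hdeg : ∀ v, G.degree v ≤ 2) : Level1Prop G :=
  fun _ _ hc _ _ hc' _ v => iff_of_true (hc.mem_support_of_preconnected hG hdeg v)
    (hc'.mem_support_of_preconnected hG hdeg v)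

end Level1

section BlowUp

open SimpleGraph

omit [Fintype X] [DecidableEq X]

variable {N : Lvl1Net X} {u : N.V} {k : ℕ} {vs : Fin k → N.V}

theorem blowUp_adj_inl_inl {x y : {w : N.V // w ≠ u}} :
    (blowUp N u k vs).Adj (.inl x) (.inl y) ↔ N.G.Adj x y := by
  simpa [blowUp, adj_comm, Subtype.ext_iff, x.2, y.2] using fun h : N.G.Adj x y => h.ne

theorem blowUp_adj_inl_inr {x : {w : N.V // w ≠ u}} {i : Fin k} :
    (blowUp N u k vs).Adj (.inl x) (.inr i) ↔ x.1 = vs i := by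
  simpa [blowUp, Subtype.ext_iff] using fun h : x.1 = vs i => h ▸ x.2

theorem blowUp_adj_inr_inr (hk : 3 ≤ k) {i j : Fin k} :
    (blowUp N u k vs).Adj (.inr i) (.inr j) ↔ (cycleGraph k).Adj i j := by
  obtain ⟨n, rfl⟩ := Nat.exists_eq_add_of_le' hk
  have hsucc : ∀ i : Fin (n + 3),
      (⟨(i.1 + 1) % (n + 3), Nat.mod_lt _ (by omega)⟩ : Fin (n + 3)) = i + 1 :=
    fun i => Fin.ext (by simp [Fin.val_add])
  simp only [blowUp, fromRel_adj, hsucc, cycleGraph_adj, sub_eq_iff_eq_add', ne_eq,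
    Sum.inr.injEq, exists_eq_left', reduceCtorEq, false_and, exists_false, false_or]
  rw [or_comm, and_iff_right_iff_imp]
  rintro (rfl | rfl) <;> simp

variable (N u k) in
def blowUpWithoutSpokes : SimpleGraph ({w : N.V // w ≠ u} ⊕ Fin k) :=
  N.G.comap (Function.Embedding.subtype (· ≠ u)) ⊕g cycleGraph k

theorem level1Prop_blowUpWithoutSpokes (hk : 3 ≤ k) : Level1Prop (blowUpWithoutSpokes N u k) :=
  (N.level1.of_embedding (Embedding.comap _ N.G)).sum
    (.of_preconnected_of_degree_le_two cycleGraph_preconnected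
      (fun i => (cycleGraph_degree_eq_two hk i).le))

variable (u k) in
def blowDown : {w : N.V // w ≠ u} ⊕ Fin k → N.V := Sum.elim Subtype.val (fun _ => u)

theorem blowUp_isBridge_inl_inr (hinj : Function.Injective vs)
    (hnb : ∀ w : N.V, N.G.Adj u w ↔ ∃ i, vs i = w)
    (hnocyc : ∀ ⦃w : N.V⦄ (c : N.G.Walk w w), c.IsCycle → u ∉ c.support)
    {x : {w : N.V // w ≠ u}} {i : Fin k} (hx : x.1 = vs i) :
    (blowUp N u k vs).IsBridge s(.inl x, .inr i) := by
  have hspoke : ∀ {y : {w : N.V // w ≠ u}} {j : Fin k}, y.1 = vs j →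
      s(.inl y, .inr j) ≠ (s(.inl x, .inr i) : Sym2 ({w : N.V // w ≠ u} ⊕ Fin k)) →
      (N.G.deleteEdges {s(x.1, u)}).Adj y u := by
    intro y j hy hne
    refine ⟨((hnb y).2 ⟨j, hy.symm⟩).symm, fun h => hne ?_⟩
    obtain rfl : y = x := Subtype.ext (by simpa [Ne.symm x.2, y.2] using h)
    rw [hinj (hy.symm.trans hx)]
  have hN : N.G.IsBridge s(x.1, u) := by
    rw [isBridge_iff_forall_cycle_notMem ((hnb x).2 ⟨i, hx.symm⟩).symm]
    exact fun _ c hc he => hnocyc c hc (c.snd_mem_support_of_mem_edges he)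
  rw [isBridge_iff] at hN ⊢
  refine fun h => hN (h.map_of_forall_adj (f := blowDown u k) ?_)
  intro a b hab
  rw [deleteEdges_adj, Set.mem_singleton_iff] at hab
  obtain ⟨hadj, hne⟩ := hab
  rcases a with y | j <;> rcases b with z | l
  · refine Adj.reachable ((deleteEdges_adj ..).2 ⟨blowUp_adj_inl_inl.1 hadj, ?_⟩)
    simp [blowDown, y.2, z.2]
  · exact (hspoke (blowUp_adj_inl_inr.1 hadj) hne).reachable
  · rw [Sym2.eq_swap] at hne
    exact (hspoke (blowUp_adj_inl_inr.1 hadj.symm) hne).reachable.symm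
  · rfl

theorem level1Prop_blowUp (hk : 3 ≤ k) (hinj : Function.Injective vs)
    (hnb : ∀ w : N.V, N.G.Adj u w ↔ ∃ i, vs i = w)
    (hnocyc : ∀ ⦃w : N.V⦄ (c : N.G.Walk w w), c.IsCycle → u ∉ c.support) :
    Level1Prop (blowUp N u k vs) := by
  refine (level1Prop_blowUpWithoutSpokes hk).of_forall_isBridge fun e he hR => ?_
  induction e with | h a b => ?_
  rw [mem_edgeSet] at he hR
  rcases a with x | i <;> rcases b with y | j
  · exact absurd (by simpa [blowUpWithoutSpokes] using blowUp_adj_inl_inl.1 he) hR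
  · exact blowUp_isBridge_inl_inr hinj hnb hnocyc (blowUp_adj_inl_inr.1 he)
  · rw [Sym2.eq_swap]
    exact blowUp_isBridge_inl_inr hinj hnb hnocyc (blowUp_adj_inl_inr.1 he.symm)
  · exact absurd (by simpa [blowUpWithoutSpokes] using (blowUp_adj_inr_inr hk).1 he) hR

theorem ncard_neighborSet_blowUp_inl (hinj : Function.Injective vs)
    (hnb : ∀ w : N.V, N.G.Adj u w ↔ ∃ i, vs i = w) (x : {w : N.V // w ≠ u}) :
    ((blowUp N u k vs).neighborSet (.inl x)).ncard = (N.G.neighborSet x).ncard := by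
  have himage : blowDown u k '' (blowUp N u k vs).neighborSet (.inl x) = N.G.neighborSet x := by
    ext w
    constructor
    · rintro ⟨y | i, hy, rfl⟩
      · exact blowUp_adj_inl_inl.1 hy
      · exact ((hnb x).2 ⟨i, (blowUp_adj_inl_inr.1 hy).symm⟩).symm
    · intro hw
      by_cases hwu : w = u
      · subst hwu
        obtain ⟨i, hi⟩ := (hnb x).1 hw.symm
        exact ⟨.inr i, blowUp_adj_inl_inr.2 hi.symm, rfl⟩
      · exact ⟨.inl ⟨w, hwu⟩, blowUp_adj_inl_inl.2 hw, rfl⟩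
  have hinjOn : Set.InjOn (blowDown u k) ((blowUp N u k vs).neighborSet (.inl x)) := by
    rintro (y | i) hy (z | j) hz h
    · exact congrArg Sum.inl (Subtype.ext h)
    · exact absurd h y.2
    · exact absurd h.symm z.2
    · rw [hinj ((blowUp_adj_inl_inr.1 hy).symm.trans (blowUp_adj_inl_inr.1 hz))]
  rw [← himage, hinjOn.ncard_image]

theorem ncard_neighborSet_blowUp_inr (hk : 3 ≤ k)
    (hnb : ∀ w : N.V, N.G.Adj u w ↔ ∃ i, vs i = w) (i : Fin k) :
    ((blowUp N u k vs).neighborSet (.inr i)).ncard = 3 := by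
  have hvs : vs i ≠ u := ((hnb _).2 ⟨i, rfl⟩).ne'
  have hset : (blowUp N u k vs).neighborSet (.inr i) =
      insert (.inl ⟨vs i, hvs⟩) (Sum.inr '' (cycleGraph k).neighborSet i) := by
    ext (y | j)
    · simp [adj_comm, blowUp_adj_inl_inr, Subtype.ext_iff]
    · simp [blowUp_adj_inr_inr hk]
  rw [hset, Set.ncard_insert_of_notMem (by simp), Set.ncard_image_of_injective _ Sum.inr_injective,
    ncard_neighborSet_eq_degree, cycleGraph_degree_eq_two hk]

theorem blowUp_connected (hk : 3 ≤ k) (hnb : ∀ w : N.V, N.G.Adj u w ↔ ∃ i, vs i = w) :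
    (blowUp N u k vs).Connected := by
  have hring : ∀ i j : Fin k, (blowUp N u k vs).Reachable (.inr i) (.inr j) := fun i j =>
    (cycleGraph_preconnected i j).map ⟨Sum.inr, (blowUp_adj_inr_inr hk).2⟩
  let i₀ : Fin k := ⟨0, by omega⟩
  let σ : N.V → {w : N.V // w ≠ u} ⊕ Fin k := fun w =>
    if h : w = u then .inr i₀ else .inl ⟨w, h⟩
  have hspoke : ∀ w (hw : w ≠ u), N.G.Adj u w →
      (blowUp N u k vs).Reachable (.inr i₀) (.inl ⟨w, hw⟩) := by
    intro w hw huw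
    obtain ⟨j, rfl⟩ := (hnb w).1 huw
    exact (hring i₀ j).trans (blowUp_adj_inl_inr.2 rfl).symm.reachable
  have hσ : ∀ a b, N.G.Adj a b → (blowUp N u k vs).Reachable (σ a) (σ b) := by
    intro a b hab
    by_cases ha : a = u <;> by_cases hb : b = u <;> simp only [σ, ha, hb, dite_true, dite_false]
    · exact absurd (ha.trans hb.symm) hab.ne
    · exact hspoke b hb (ha ▸ hab)
    · exact (hspoke a ha (hb ▸ hab.symm)).symm
    · exact (blowUp_adj_inl_inl.2 hab).reachable
  have hreach : ∀ p, (blowUp N u k vs).Reachable p (σ u) := by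
    rintro (x | j)
    · simpa [σ, x.2] using (N.conn.preconnected x u).map_of_forall_adj hσ
    · simpa [σ] using hring j i₀
  have : Nonempty ({w : N.V // w ≠ u} ⊕ Fin k) := ⟨.inr i₀⟩
  exact ⟨fun p q => (hreach p).trans (hreach q).symm⟩

theorem ncard_edgeSet_blowUp_add_card (hk : 3 ≤ k) (hinj : Function.Injective vs)
    (hnb : ∀ w : N.V, N.G.Adj u w ↔ ∃ i, vs i = w) :
    (blowUp N u k vs).edgeSet.ncard + Fintype.card N.V =
      N.G.edgeSet.ncard + Fintype.card ({w : N.V // w ≠ u} ⊕ Fin k) + 1 := by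
  have hu : (N.G.neighborSet u).ncard = k := by
    have : N.G.neighborSet u = Set.range vs := by ext w; simp [hnb w]
    rw [this, Set.ncard_range_of_injective hinj, Nat.card_eq_fintype_card, Fintype.card_fin]
  have hN := N.G.sum_ncard_neighborSet_eq_twice_ncard_edgeSet
  rw [Fintype.sum_eq_add_sum_subtype_ne _ u, hu] at hN
  have hB := (blowUp N u k vs).sum_ncard_neighborSet_eq_twice_ncard_edgeSet
  simp only [Fintype.sum_sum_type, ncard_neighborSet_blowUp_inl hinj hnb,
    ncard_neighborSet_blowUp_inr hk hnb, Finset.sum_const, Finset.card_univ, Fintype.card_fin,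
    smul_eq_mul] at hB
  have hV : Fintype.card {w : N.V // w ≠ u} + 1 = Fintype.card N.V := by
    rw [Fintype.card_subtype_compl, Fintype.card_subtype_eq]
    have := Fintype.card_pos_iff.2 ⟨u⟩
    omega
  rw [Fintype.card_sum, Fintype.card_fin]
  omega

end BlowUp

/-- The number of cycles of a connected graph is encoded as its cycle rank `|E| - |V| + 1`. -/
theorem blowUp_level1 (N : Lvl1Net X) (u : N.V) (k : ℕ) (hk : 3 ≤ k)
    (vs : Fin k → N.V) (hinj : Function.Injective vs)
    (hnb : ∀ w : N.V, N.G.Adj u w ↔ ∃ i, vs i = w)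
    (hleaf : ∀ x : X, N.leaf x ≠ u)
    (hnocyc : ∀ ⦃w : N.V⦄ (c : N.G.Walk w w), c.IsCycle → u ∉ c.support) :
    (blowUp N u k vs).Connected ∧
    (∀ x : X,
      ((blowUp N u k vs).neighborSet (Sum.inl ⟨N.leaf x, hleaf x⟩)).ncard = 1) ∧
    (∀ p : {w : N.V // w ≠ u} ⊕ Fin k,
      ((blowUp N u k vs).neighborSet p).ncard = 1 →
        ∃ x : X, p = Sum.inl ⟨N.leaf x, hleaf x⟩) ∧
    (∀ p : {w : N.V // w ≠ u} ⊕ Fin k,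
      ((blowUp N u k vs).neighborSet p).ncard = 1 ∨
        3 ≤ ((blowUp N u k vs).neighborSet p).ncard) ∧
    Level1Prop (blowUp N u k vs) ∧
    (blowUp N u k vs).edgeSet.ncard + Fintype.card N.V =
      N.G.edgeSet.ncard + Fintype.card ({w : N.V // w ≠ u} ⊕ Fin k) + 1 := by
  refine ⟨blowUp_connected hk hnb, fun x => ?_, ?_, ?_, level1Prop_blowUp hk hinj hnb hnocyc,
    ncard_edgeSet_blowUp_add_card hk hinj hnb⟩
  · rw [ncard_neighborSet_blowUp_inl hinj hnb]
    exact N.deg_leaf x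
  · rintro (y | i) h
    · rw [ncard_neighborSet_blowUp_inl hinj hnb] at h
      obtain ⟨x, hx⟩ := N.leaf_of_deg y h
      exact ⟨x, congrArg Sum.inl (Subtype.ext hx.symm)⟩
    · rw [ncard_neighborSet_blowUp_inr hk hnb] at h
      omega
  · rintro (y | i)
    · rw [ncard_neighborSet_blowUp_inl hinj hnb]
      exact N.deg_ge y
    · rw [ncard_neighborSet_blowUp_inr hk hnb]
      exact Or.inr le_rfl
end
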